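/- arXiv:2203.03275 — 8 statements merged into one kernel-verified Lean document; each statement's English description precedes it below -/
import Mathlib

section
/- Let P_j denote the shifted Legendre polynomials on [0,1], orthonormal so that ∫₀¹ P_i(x)P_j(x) dx = δ_{ij} with deg P_j = j. If G: [0,h] → ℝ^d is analytic (admits a convergent Taylor expansion at 0), then ∫₀¹ P_j(c) G(ch) dc = O(h^j) as h → 0⁺, for every j ≥ 0. -/
open Polynomial


lemma ortho_lowdeg (P : ℕ → Polynomial ℝ)
    (hdeg : ∀ j, (P j).natDegree = j)
    (horth : ∀ i j, (∫ x in (0:ℝ)..1, (P i).eval x * (P j).eval x)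
      = if i = j then 1 else 0)
    (j : ℕ) :
    ∀ n, ∀ q : Polynomial ℝ, q.natDegree ≤ n → n < j →
      (∫ c in (0:ℝ)..1, (P j).eval c * q.eval c) = 0 := by
  intro n
  induction n using Nat.strong_induction_on with
  | _ n IH =>
    intro q hq hnj
    have hPn0 : P n ≠ 0 := by
      intro h0
      have h1 := horth n n
      simp [h0] at h1
    have hL : (P n).coeff n ≠ 0 := by
      have := Polynomial.leadingCoeff_ne_zero.mpr hPn0
      rwa [Polynomial.leadingCoeff, hdeg n] at this
    set a : ℝ := q.coeff n / (P n).coeff n with ha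
    set r : Polynomial ℝ := q - C a * P n with hr
    have hr_coeff : r.coeff n = 0 := by
      simp only [hr, Polynomial.coeff_sub, Polynomial.coeff_C_mul, ha]
      field_simp
      ring
    have hr_deg : r.natDegree ≤ n := by
      refine (Polynomial.natDegree_sub_le _ _).trans (max_le hq ?_)
      exact (Polynomial.natDegree_C_mul_le _ _).trans (le_of_eq (hdeg n))
    have heval : ∀ c : ℝ, q.eval c = a * (P n).eval c + r.eval c := by
      intro c; simp [hr]
    have int1 : IntervalIntegrable (fun c => a * ((P j).eval c * (P n).eval c)) MeasureTheory.volume 0 1 :=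
      ((continuous_const.mul ((P j).continuous_aeval.mul (P n).continuous_aeval))).intervalIntegrable _ _
    have int2 : IntervalIntegrable (fun c => (P j).eval c * r.eval c) MeasureTheory.volume 0 1 :=
      ((P j).continuous_aeval.mul r.continuous_aeval).intervalIntegrable _ _
    have hsplit : (∫ c in (0:ℝ)..1, (P j).eval c * q.eval c)
        = a * (∫ c in (0:ℝ)..1, (P j).eval c * (P n).eval c)
          + (∫ c in (0:ℝ)..1, (P j).eval c * r.eval c) := by
      rw [← intervalIntegral.integral_const_mul, ← intervalIntegral.integral_add int1 int2]
      apply intervalIntegral.integral_congr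
      intro c _
      simp only []
      rw [heval c]; ring
    have h1 : (∫ c in (0:ℝ)..1, (P j).eval c * (P n).eval c) = 0 := by
      rw [horth j n, if_neg (by omega)]
    have h2 : (∫ c in (0:ℝ)..1, (P j).eval c * r.eval c) = 0 := by
      rcases eq_or_ne r 0 with h0 | h0
      · simp [h0]
      · have hlt : r.natDegree < n := by
          rcases lt_or_eq_of_le hr_deg with h | h
          · exact h
          · exfalso
            have := Polynomial.leadingCoeff_ne_zero.mpr h0
            rw [Polynomial.leadingCoeff, h] at this
            exact this hr_coeff
        exact IH r.natDegree hlt r le_rfl (hlt.trans hnj)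
    rw [hsplit, h1, h2]; ring

open Polynomial

private theorem stmt4aux (d : ℕ) (P : ℕ → Polynomial ℝ)
    (hdeg : ∀ j, (P j).natDegree = j)
    (horth : ∀ i j, (∫ x in (0:ℝ)..1, (P i).eval x * (P j).eval x)
      = if i = j then 1 else 0)
    (G : ℝ → Fin d → ℝ) (hG : AnalyticAt ℝ G 0) (j : ℕ)
    (ortho_lowdeg : ∀ n, ∀ q : Polynomial ℝ, q.natDegree ≤ n → n < j →
      (∫ c in (0:ℝ)..1, (P j).eval c * q.eval c) = 0) :
    ∃ C h₀ : ℝ, 0 < C ∧ 0 < h₀ ∧ ∀ h : ℝ, 0 < h → h ≤ h₀ →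
      ‖∫ c in (0:ℝ)..1, ((P j).eval c) • G (c * h)‖ ≤ C * h ^ j := by
  -- monomial orthogonality
  have hmono : ∀ k, k < j → (∫ c in (0:ℝ)..1, (P j).eval c * c ^ k) = 0 := by
    intro k hk
    have := ortho_lowdeg k (X ^ k) (Polynomial.natDegree_X_pow_le k) hk
    simpa using this
  obtain ⟨p, hp⟩ := hG
  -- Taylor remainder bound
  have hO := hp.isBigO_sub_partialSum_pow j
  rw [Asymptotics.isBigO_iff] at hO
  obtain ⟨M, hM⟩ := hO
  rw [Metric.eventually_nhds_iff] at hM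
  obtain ⟨δ, δpos, hδ⟩ := hM
  -- continuity of G on an actual ball
  obtain ⟨r, hball⟩ := hp
  obtain ⟨r', hr'0, hr'r⟩ := ENNReal.lt_iff_exists_nnreal_btwn.1 hball.r_pos
  have hρ : (0:ℝ) < (r' : ℝ) := by exact_mod_cast hr'0
  have hcont : ContinuousOn G (Metric.ball (0:ℝ) (r' : ℝ)) := by
    refine hball.continuousOn.mono ?_
    rw [← Metric.emetric_ball_nnreal]
    exact EMetric.ball_subset_ball hr'r.le
  -- bound on P j on [0,1]
  obtain ⟨B, hB⟩ := (isCompact_Icc (a := (0:ℝ)) (b := 1)).exists_bound_of_continuousOn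
    (P j).continuous_aeval.continuousOn
  have hB0 : 0 ≤ B := le_trans (norm_nonneg _) (hB 0 (by norm_num))
  refine ⟨(B + 1) * (|M| + 1), min (δ / 2) ((r' : ℝ) / 2), by positivity, by positivity, ?_⟩
  intro h hpos hle
  have hle1 : h ≤ δ / 2 := hle.trans (min_le_left _ _)
  have hle2 : h ≤ (r' : ℝ) / 2 := hle.trans (min_le_right _ _)
  set S : ℝ → Fin d → ℝ := fun y => p.partialSum j y with hSdef
  -- the partial sum integrates to zero against P j
  have hS : (∫ c in (0:ℝ)..1, (P j).eval c • S (c * h)) = 0 := by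
    have hpt : ∀ c : ℝ, (P j).eval c • S (c * h)
        = ∑ k ∈ Finset.range j, ((P j).eval c * c ^ k * h ^ k) • (p k fun _ => (1:ℝ)) := by
      intro c
      simp only [hSdef, FormalMultilinearSeries.partialSum, Finset.smul_sum]
      refine Finset.sum_congr rfl fun k _ => ?_
      have h1 : (fun _ : Fin k => c * h) = (fun _ : Fin k => (c * h) • (1:ℝ)) := by
        funext i; simp
      rw [h1, (p k).map_smul_univ]
      simp [smul_smul, mul_pow, Finset.prod_const]
      ring_nf
    simp only [hpt]
    rw [intervalIntegral.integral_finset_sum]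
    · refine Finset.sum_eq_zero fun k hk => ?_
      rw [intervalIntegral.integral_smul_const]
      have : (∫ c in (0:ℝ)..1, (P j).eval c * c ^ k * h ^ k)
          = (∫ c in (0:ℝ)..1, (P j).eval c * c ^ k) * h ^ k := by
        rw [← intervalIntegral.integral_mul_const]
      rw [this, hmono k (Finset.mem_range.mp hk), zero_mul, zero_smul]
    · intro k _
      exact ((((P j).continuous_aeval.mul (continuous_pow k)).mul continuous_const).smul
        continuous_const).intervalIntegrable _ _
  -- continuity / integrability on [0,1]
  have hmaps : ∀ c ∈ Set.uIcc (0:ℝ) 1, c * h ∈ Metric.ball (0:ℝ) (r' : ℝ) := by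
    intro c hc
    rw [Set.uIcc_of_le (by norm_num : (0:ℝ) ≤ 1)] at hc
    rw [Metric.mem_ball, Real.dist_eq, sub_zero, abs_mul, abs_of_nonneg hc.1,
      abs_of_pos hpos]
    calc c * h ≤ 1 * h := by nlinarith [hc.2]
    _ = h := one_mul h
    _ < (r' : ℝ) := by linarith
  have hGc : ContinuousOn (fun c : ℝ => G (c * h)) (Set.uIcc (0:ℝ) 1) :=
    hcont.comp ((continuous_id.mul continuous_const).continuousOn) hmaps
  have hScont : Continuous fun c : ℝ => S (c * h) := by
    simp only [hSdef, FormalMultilinearSeries.partialSum]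
    exact continuous_finset_sum _ fun k _ => ((p k).cont.comp
      (continuous_pi fun i => continuous_id.mul continuous_const))
  have int1 : IntervalIntegrable (fun c => (P j).eval c • (G (c * h) - S (c * h)))
      MeasureTheory.volume 0 1 := by
    apply ContinuousOn.intervalIntegrable
    exact (P j).continuous_aeval.continuousOn.smul (hGc.sub hScont.continuousOn)
  have int2 : IntervalIntegrable (fun c => (P j).eval c • S (c * h))
      MeasureTheory.volume 0 1 :=
    ((P j).continuous_aeval.smul hScont).intervalIntegrable _ _
  have hsplit : (∫ c in (0:ℝ)..1, (P j).eval c • G (c * h))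
      = (∫ c in (0:ℝ)..1, (P j).eval c • (G (c * h) - S (c * h)))
        + (∫ c in (0:ℝ)..1, (P j).eval c • S (c * h)) := by
    rw [← intervalIntegral.integral_add int1 int2]
    apply intervalIntegral.integral_congr
    intro c _
    simp [smul_sub]
  rw [hsplit, hS, add_zero]
  have hbound : ∀ c ∈ Set.uIoc (0:ℝ) 1,
      ‖(P j).eval c • (G (c * h) - S (c * h))‖ ≤ (B + 1) * (|M| + 1) * h ^ j := by
    intro c hc
    rw [Set.uIoc_of_le (by norm_num : (0:ℝ) ≤ 1)] at hc
    have hc0 : 0 < c := hc.1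
    have hc1 : c ≤ 1 := hc.2
    have hdist : dist (c * h) 0 < δ := by
      rw [Real.dist_eq, sub_zero, abs_mul, abs_of_pos hc0, abs_of_pos hpos]
      calc c * h ≤ 1 * h := by nlinarith
      _ = h := one_mul h
      _ < δ := by linarith
    have hrem := hδ hdist
    simp only [zero_add, hSdef] at hrem
    rw [norm_smul]
    have hPb : ‖(P j).eval c‖ ≤ B := hB c ⟨hc0.le, hc1⟩
    have hnorm : ‖‖c * h‖ ^ j‖ = (c * h) ^ j := by
      rw [Real.norm_eq_abs, Real.norm_eq_abs, abs_mul, abs_of_pos hc0, abs_of_pos hpos,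
        abs_of_nonneg (by positivity)]
    have hrem2 : ‖G (c * h) - S (c * h)‖ ≤ |M| * (c * h) ^ j := by
      calc ‖G (c * h) - S (c * h)‖ ≤ M * ‖‖c * h‖ ^ j‖ := hrem
      _ = M * (c * h) ^ j := by rw [hnorm]
      _ ≤ |M| * (c * h) ^ j := by
          have : (0:ℝ) ≤ (c * h) ^ j := by positivity
          nlinarith [le_abs_self M]
    have hch : (c * h) ^ j ≤ h ^ j := by
      apply pow_le_pow_left₀ (by positivity)
      nlinarith
    calc ‖(P j).eval c‖ * ‖G (c * h) - S (c * h)‖ ≤ B * (|M| * (c * h) ^ j) := by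
          apply mul_le_mul hPb hrem2 (norm_nonneg _) hB0
    _ ≤ B * (|M| * h ^ j) := by
          have h1 : B * |M| * (c * h) ^ j ≤ B * |M| * h ^ j :=
            mul_le_mul_of_nonneg_left hch (mul_nonneg hB0 (abs_nonneg M))
          nlinarith
    _ ≤ (B + 1) * (|M| + 1) * h ^ j := by
          have hj : (0:ℝ) ≤ h ^ j := by positivity
          have h2 : B * |M| ≤ (B + 1) * (|M| + 1) := by nlinarith [abs_nonneg M]
          nlinarith [mul_le_mul_of_nonneg_right h2 hj]
  calc ‖∫ c in (0:ℝ)..1, (P j).eval c • (G (c * h) - S (c * h))‖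
      ≤ (B + 1) * (|M| + 1) * h ^ j * |1 - 0| :=
        intervalIntegral.norm_integral_le_of_norm_le_const hbound
  _ = (B + 1) * (|M| + 1) * h ^ j := by norm_num

/-- Line integral lemma: if `P_j` are the orthonormal shifted Legendre polynomials on
`[0,1]` (degree `j`) and `G` admits a convergent Taylor expansion at `0`, then
`∫₀¹ P_j(c) G(ch) dc = O(h^j)` as `h → 0⁺`. -/
theorem stmt4 (d : ℕ) (P : ℕ → Polynomial ℝ)
    (hdeg : ∀ j, (P j).natDegree = j)
    (horth : ∀ i j, (∫ x in (0:ℝ)..1, (P i).eval x * (P j).eval x)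
      = if i = j then 1 else 0)
    (G : ℝ → Fin d → ℝ) (hG : AnalyticAt ℝ G 0) (j : ℕ) :
    ∃ C h₀ : ℝ, 0 < C ∧ 0 < h₀ ∧ ∀ h : ℝ, 0 < h → h ≤ h₀ →
      ‖∫ c in (0:ℝ)..1, ((P j).eval c) • G (c * h)‖ ≤ C * h ^ j :=
  stmt4aux d P hdeg horth G hG j (ortho_lowdeg P hdeg horth j)
end

section
/- Let u, v: [0,h] → ℝ^m be polynomials of degree s with u̇(c_ih) = M⁻¹ v(c_ih) at the Gauss–Legendre nodes c_1,...,c_s (zeros of P_s), u(0) = q_0, and let g: ℝ^m → ℝ^ν have quadratic polynomial components. If g(q_0) = 0 and ∇g(u(c_ih))ᵀ M⁻¹ v(c_ih) = 0 for i = 1,...,s, then g(u(h)) = 0. -/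
open Polynomial Matrix Finset

section Aux
open Polynomial Finset

lemma orth_pow (s : ℕ) (P : ℕ → Polynomial ℝ)
    (hdeg : ∀ j, (P j).natDegree = j)
    (horth : ∀ i j, (∫ x in (0:ℝ)..1, (P i).eval x * (P j).eval x)
      = if i = j then 1 else 0) :
    ∀ j < s, (∫ x in (0:ℝ)..1, (P s).eval x * x ^ j) = 0 := by
  intro j
  induction j using Nat.strong_induction_on with
  | _ j IH =>
    intro hj
    have hpne : P j ≠ 0 := by
      intro h0
      have := horth j j
      simp [h0] at this
    have hlead : (P j).coeff j ≠ 0 := by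
      have := leadingCoeff_ne_zero.mpr hpne
      rwa [leadingCoeff, hdeg j] at this
    have hexp : ∀ x : ℝ, (P j).eval x = ∑ i ∈ range (j + 1), (P j).coeff i * x ^ i := by
      intro x
      conv_lhs => rw [eval_eq_sum_range, hdeg j]
    have h1 : (∫ x in (0:ℝ)..1, (P s).eval x * (P j).eval x)
        = ∑ i ∈ range (j + 1), ∫ x in (0:ℝ)..1, (P j).coeff i * ((P s).eval x * x ^ i) := by
      rw [← intervalIntegral.integral_finset_sum]
      · congr 1 with x
        rw [hexp x, mul_sum]
        exact Finset.sum_congr rfl fun i _ => by ring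
      · intro i _
        exact (continuous_const.mul (((P s).continuous).mul (continuous_pow i))).intervalIntegrable 0 1
    have h2 : ∀ i ∈ range (j + 1),
        (∫ x in (0:ℝ)..1, (P j).coeff i * ((P s).eval x * x ^ i))
          = (P j).coeff i * ∫ x in (0:ℝ)..1, (P s).eval x * x ^ i := fun i _ =>
      intervalIntegral.integral_const_mul _ _
    rw [Finset.sum_congr rfl h2] at h1
    have hsum : ∑ i ∈ range (j + 1), (P j).coeff i * ∫ x in (0:ℝ)..1, (P s).eval x * x ^ i
        = (P j).coeff j * ∫ x in (0:ℝ)..1, (P s).eval x * x ^ j := by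
      rw [Finset.sum_range_succ]
      rw [Finset.sum_eq_zero fun i hi => by
        rw [IH i (mem_range.mp hi) ((mem_range.mp hi).trans hj), mul_zero]]
      ring
    have h0 : (∫ x in (0:ℝ)..1, (P s).eval x * (P j).eval x) = 0 := by
      rw [horth s j, if_neg (by omega)]
    rw [h0, hsum] at h1
    exact (mul_eq_zero.mp h1.symm).resolve_left hlead

lemma orth_poly (s : ℕ) (P : ℕ → Polynomial ℝ)
    (hdeg : ∀ j, (P j).natDegree = j)
    (horth : ∀ i j, (∫ x in (0:ℝ)..1, (P i).eval x * (P j).eval x)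
      = if i = j then 1 else 0)
    (R : Polynomial ℝ) (hR : R.natDegree < s) :
    (∫ x in (0:ℝ)..1, (P s).eval x * R.eval x) = 0 := by
  have hexp : ∀ x : ℝ, R.eval x = ∑ i ∈ range (R.natDegree + 1), R.coeff i * x ^ i := by
    intro x; conv_lhs => rw [eval_eq_sum_range]
  have h1 : (∫ x in (0:ℝ)..1, (P s).eval x * R.eval x)
      = ∑ i ∈ range (R.natDegree + 1), ∫ x in (0:ℝ)..1, R.coeff i * ((P s).eval x * x ^ i) := by
    rw [← intervalIntegral.integral_finset_sum]
    · congr 1 with x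
      rw [hexp x, mul_sum]
      exact Finset.sum_congr rfl fun i _ => by ring
    · intro i _
      exact (continuous_const.mul (((P s).continuous).mul (continuous_pow i))).intervalIntegrable 0 1
  rw [h1]
  refine Finset.sum_eq_zero fun i hi => ?_
  rw [intervalIntegral.integral_const_mul,
    orth_pow s P hdeg horth i (by have := mem_range.mp hi; omega), mul_zero]

lemma quad_zero (s : ℕ) (hs : 0 < s) (P : ℕ → Polynomial ℝ)
    (hdeg : ∀ j, (P j).natDegree = j)
    (horth : ∀ i j, (∫ x in (0:ℝ)..1, (P i).eval x * (P j).eval x)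
      = if i = j then 1 else 0)
    (c : Fin s → ℝ) (hinj : Function.Injective c)
    (hzero : ∀ i, (P s).eval (c i) = 0)
    (Q : Polynomial ℝ) (hQdeg : Q.natDegree ≤ 2 * s - 1)
    (hQzero : ∀ i, Q.eval (c i) = 0) :
    (∫ x in (0:ℝ)..1, Q.eval x) = 0 := by
  classical
  set Prod : Polynomial ℝ := ∏ i : Fin s, (X - C (c i)) with hProd
  have hPm : Prod.Monic := monic_prod_of_monic _ _ fun i _ => monic_X_sub_C _
  have hPd : Prod.natDegree = s := by
    rw [hProd, natDegree_prod _ _ fun i _ => X_sub_C_ne_zero _]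
    simp
  have hPev : ∀ i, Prod.eval (c i) = 0 := by
    intro i
    rw [hProd, eval_prod]
    exact Finset.prod_eq_zero (mem_univ i) (by simp)
  have hPne : P s ≠ 0 := by
    intro h0; have := horth s s; simp [h0] at this
  -- r := Q %ₘ Prod is zero
  have hrz : Q %ₘ Prod = 0 := by
    by_cases hr : Q %ₘ Prod = 0
    · exact hr
    refine eq_zero_of_natDegree_lt_card_of_eval_eq_zero _ hinj (fun i => ?_) ?_
    · have := modByMonic_add_div Q Prod
      have he := congrArg (eval (c i)) this
      simp only [eval_add, eval_mul, hPev i, zero_mul, add_zero, hQzero i] at he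
      exact he
    · have := degree_modByMonic_lt Q hPm
      rw [degree_eq_natDegree hPm.ne_zero, hPd] at this
      have := natDegree_lt_iff_degree_lt hr |>.mpr (by exact_mod_cast this)
      simpa using this
  have hfac : Q = Prod * (Q /ₘ Prod) := by
    have := modByMonic_add_div Q Prod
    rw [hrz, zero_add] at this
    exact this.symm
  set R := Q /ₘ Prod with hR
  -- P s = C lead * Prod
  set lead := (P s).leadingCoeff with hlead
  have hlne : lead ≠ 0 := leadingCoeff_ne_zero.mpr hPne
  have hPsProd : P s = C lead * Prod := by
    by_cases hD : P s - C lead * Prod = 0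
    · exact sub_eq_zero.mp hD
    refine absurd (eq_zero_of_natDegree_lt_card_of_eval_eq_zero
      (P s - C lead * Prod) hinj (fun i => ?_) ?_) hD
    · simp [hzero i, hPev i]
    · have hdlt : (P s - C lead * Prod).degree < (P s).degree := by
        refine degree_sub_lt ?_ hPne ?_
        · rw [degree_eq_natDegree hPne, hdeg s, degree_mul, degree_C hlne,
            degree_eq_natDegree hPm.ne_zero, hPd]
          simp
        · rw [leadingCoeff_mul, leadingCoeff_C, hPm.leadingCoeff, mul_one]
      rw [degree_eq_natDegree hPne, hdeg s] at hdlt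
      have := natDegree_lt_iff_degree_lt hD |>.mpr hdlt
      simpa using this
  have hProdPs : Prod = C lead⁻¹ * P s := by
    rw [hPsProd, ← mul_assoc, ← C_mul, inv_mul_cancel₀ hlne, C_1, one_mul]
  by_cases hRz : R = 0
  · rw [hfac, hRz, mul_zero]
    simp
  have hRdeg : R.natDegree < s := by
    have := natDegree_mul (hPm.ne_zero) hRz
    rw [← hfac, hPd] at this
    omega
  have : (∫ x in (0:ℝ)..1, Q.eval x)
      = lead⁻¹ * ∫ x in (0:ℝ)..1, (P s).eval x * R.eval x := by
    rw [← intervalIntegral.integral_const_mul]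
    congr 1 with x
    rw [hfac, hProdPs]
    simp [mul_assoc, mul_left_comm]
  rw [this, orth_poly s P hdeg horth R hRdeg, mul_zero]

end Aux

/-- Constraint conservation: if `u, v ∈ Π_s` on `[0,h]` satisfy `u̇(c_ih) = M⁻¹v(c_ih)`
at the Gauss–Legendre nodes (zeros of `P_s`), `u(0) = q₀`, the components of `g` are
quadratic (`g_a(x) = xᵀA_a x + b_aᵀx + e_a` with `A_a` symmetric), `g(q₀) = 0` and
`∇g(u(c_ih))ᵀ M⁻¹ v(c_ih) = 0` for all `i`, then `g(u(h)) = 0`. -/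
theorem stmt8 (s m ν : ℕ) (hs : 0 < s) (h : ℝ) (hh : 0 < h)
    (P : ℕ → Polynomial ℝ)
    (hdeg : ∀ j, (P j).natDegree = j)
    (horth : ∀ i j, (∫ x in (0:ℝ)..1, (P i).eval x * (P j).eval x)
      = if i = j then 1 else 0)
    (c : Fin s → ℝ) (hmono : StrictMono c)
    (hmem : ∀ i, c i ∈ Set.Ioo (0:ℝ) 1)
    (hzero : ∀ i, (P s).eval (c i) = 0)
    (M : Matrix (Fin m) (Fin m) ℝ) (hM : IsUnit M.det)
    (A : Fin ν → Matrix (Fin m) (Fin m) ℝ) (hA : ∀ a, (A a).IsSymm)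
    (bv : Fin ν → Fin m → ℝ) (e : Fin ν → ℝ)
    (q0 : Fin m → ℝ)
    (u v : Fin m → Polynomial ℝ)
    (hudeg : ∀ k, (u k).natDegree ≤ s) (hvdeg : ∀ k, (v k).natDegree ≤ s)
    (uval vval : ℝ → Fin m → ℝ)
    (huval : ∀ t k, uval t k = (u k).eval t)
    (hvval : ∀ t k, vval t k = (v k).eval t)
    (hu0 : uval 0 = q0)
    (hode : ∀ (i : Fin s) (k : Fin m),
      (Polynomial.derivative (u k)).eval (c i * h)
        = M⁻¹.mulVec (vval (c i * h)) k)
    (hg0 : ∀ a, q0 ⬝ᵥ (A a).mulVec q0 + bv a ⬝ᵥ q0 + e a = 0)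
    (hhid : ∀ (i : Fin s) (a : Fin ν),
      ((2 : ℝ) • (A a).mulVec (uval (c i * h)) + bv a)
        ⬝ᵥ (M⁻¹.mulVec (vval (c i * h))) = 0) :
    ∀ a, uval h ⬝ᵥ (A a).mulVec (uval h) + bv a ⬝ᵥ uval h + e a = 0 := by
  intro a
  classical
  set Φ : Polynomial ℝ :=
    (∑ k : Fin m, ∑ l : Fin m, C (A a k l) * (u k * u l))
      + ((∑ k : Fin m, C (bv a k) * u k) + C (e a)) with hΦ
  have hΦeval : ∀ t : ℝ,
      Φ.eval t = uval t ⬝ᵥ (A a).mulVec (uval t) + bv a ⬝ᵥ uval t + e a := by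
    intro t
    simp only [hΦ, eval_add, eval_finset_sum, eval_mul, eval_C,
      dotProduct, mulVec, huval, Finset.mul_sum]
    rw [add_assoc]
    congr 1
    exact Finset.sum_congr rfl fun k _ => Finset.sum_congr rfl fun l _ => by ring
  -- derivative vanishes at nodes
  have hdneval : ∀ i : Fin s, (derivative Φ).eval (c i * h) = 0 := by
    intro i
    have hid := hhid i a
    set U : Fin m → ℝ := uval (c i * h) with hU
    set w : Fin m → ℝ := M⁻¹.mulVec (vval (c i * h)) with hw
    have hUe : ∀ k, (u k).eval (c i * h) = U k := fun k => (huval _ k).symm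
    have hwe : ∀ k, (derivative (u k)).eval (c i * h) = w k := fun k => hode i k
    have hval : (derivative Φ).eval (c i * h)
        = (∑ k : Fin m, ∑ l : Fin m, A a k l * (w k * U l + U k * w l))
          + ∑ k : Fin m, bv a k * w k := by
      simp only [hΦ, derivative_add, derivative_sum, derivative_mul, derivative_C,
        zero_mul, zero_add, add_zero, eval_add, eval_finset_sum, eval_mul, eval_C,
        hUe, hwe]
    have hid' : (∑ k : Fin m, (2 * ∑ l : Fin m, A a k l * U l + bv a k) * w k) = 0 := by
      rw [← hid]
      simp [dotProduct, mulVec]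
    have S1 : (∑ k : Fin m, ∑ l : Fin m, A a k l * (w k * U l + U k * w l))
        = (∑ k : Fin m, ∑ l : Fin m, A a k l * (U l * w k))
          + ∑ k : Fin m, ∑ l : Fin m, A a k l * (U k * w l) := by
      rw [← Finset.sum_add_distrib]
      refine Finset.sum_congr rfl fun k _ => ?_
      rw [← Finset.sum_add_distrib]
      exact Finset.sum_congr rfl fun l _ => by ring
    have S2 : (∑ k : Fin m, ∑ l : Fin m, A a k l * (U k * w l))
        = ∑ k : Fin m, ∑ l : Fin m, A a k l * (U l * w k) := by
      rw [Finset.sum_comm]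
      exact Finset.sum_congr rfl fun k _ => Finset.sum_congr rfl fun l _ =>
        congrArg (fun z => z * (U l * w k)) ((hA a).apply k l)
    have S3 : (∑ k : Fin m, (2 * ∑ l : Fin m, A a k l * U l + bv a k) * w k)
        = (2:ℝ) * (∑ k : Fin m, ∑ l : Fin m, A a k l * (U l * w k))
          + ∑ k : Fin m, bv a k * w k := by
      rw [Finset.mul_sum, ← Finset.sum_add_distrib]
      refine Finset.sum_congr rfl fun k _ => ?_
      have hS : (∑ l : Fin m, A a k l * U l) * w k
          = ∑ l : Fin m, A a k l * (U l * w k) := by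
        rw [Finset.sum_mul]
        exact Finset.sum_congr rfl fun l _ => by ring
      calc (2 * ∑ l : Fin m, A a k l * U l + bv a k) * w k
          = 2 * ((∑ l : Fin m, A a k l * U l) * w k) + bv a k * w k := by ring
        _ = 2 * (∑ l : Fin m, A a k l * (U l * w k)) + bv a k * w k := by rw [hS]
    rw [hval, S1, S2]
    rw [show (∑ k : Fin m, ∑ l : Fin m, A a k l * (U l * w k))
        + (∑ k : Fin m, ∑ l : Fin m, A a k l * (U l * w k))
        + ∑ k : Fin m, bv a k * w k
        = (2:ℝ) * (∑ k : Fin m, ∑ l : Fin m, A a k l * (U l * w k))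
          + ∑ k : Fin m, bv a k * w k by ring]
    rw [← S3]
    exact hid'
  -- degree bound
  have hΦdeg : Φ.natDegree ≤ 2 * s := by
    refine (natDegree_add_le _ _).trans (max_le ?_ (le_trans (natDegree_add_le _ _) ?_))
    · refine natDegree_sum_le_of_forall_le _ _ fun k _ => ?_
      refine natDegree_sum_le_of_forall_le _ _ fun l _ => ?_
      calc (C (A a k l) * (u k * u l)).natDegree
          ≤ (C (A a k l)).natDegree + (u k * u l).natDegree := natDegree_mul_le
        _ ≤ 0 + ((u k).natDegree + (u l).natDegree) := by
            exact add_le_add (le_of_eq (natDegree_C _)) natDegree_mul_le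
        _ ≤ 2 * s := by have := hudeg k; have := hudeg l; omega
    · refine max_le ?_ ?_
      · refine natDegree_sum_le_of_forall_le _ _ fun k _ => ?_
        calc (C (bv a k) * u k).natDegree
            ≤ (C (bv a k)).natDegree + (u k).natDegree := natDegree_mul_le
          _ ≤ 2 * s := by
              rw [natDegree_C]; have := hudeg k; omega
      · simp [natDegree_C]
  have hΦ'deg : (derivative Φ).natDegree ≤ 2 * s - 1 := by
    have := natDegree_derivative_le Φ
    omega
  -- Q := derivative Φ composed with h * X
  set Q : Polynomial ℝ := (derivative Φ).comp (C h * X) with hQ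
  have hQeval : ∀ x : ℝ, Q.eval x = (derivative Φ).eval (h * x) := by
    intro x; simp [hQ]
  have hQdeg : Q.natDegree ≤ 2 * s - 1 := by
    calc Q.natDegree ≤ (derivative Φ).natDegree * (C h * X).natDegree :=
        natDegree_comp_le
      _ ≤ (2 * s - 1) * 1 := by
          refine Nat.mul_le_mul hΦ'deg ?_
          simp [natDegree_C_mul_X h hh.ne']
      _ = 2 * s - 1 := by omega
  have hQzero : ∀ i, Q.eval (c i) = 0 := by
    intro i; rw [hQeval, mul_comm]; exact hdneval i
  have hint1 : (∫ x in (0:ℝ)..1, Q.eval x) = 0 :=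
    quad_zero s hs P hdeg horth c hmono.injective hzero Q hQdeg hQzero
  -- change of variables
  have hint2 : (∫ t in (0:ℝ)..h, (derivative Φ).eval t) = 0 := by
    have hcv := intervalIntegral.integral_comp_mul_left
      (fun t => (derivative Φ).eval t) (a := (0:ℝ)) (b := 1) hh.ne'
    have hkey : (∫ x in (0:ℝ)..1, (derivative Φ).eval (h * x))
        = h⁻¹ • ∫ t in (0:ℝ)..h, (derivative Φ).eval t := by
      simpa using hcv
    have hq0 : (∫ x in (0:ℝ)..1, (derivative Φ).eval (h * x)) = 0 := by
      exact (intervalIntegral.integral_congr (fun x _ => hQeval x)).symm.trans hint1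
    rw [hq0] at hkey
    have hkey2 := hkey.symm
    rw [smul_eq_mul] at hkey2
    rcases mul_eq_zero.mp hkey2 with h1 | h2
    · exact absurd h1 (inv_ne_zero hh.ne')
    · exact h2
  -- FTC
  have hftc : (∫ t in (0:ℝ)..h, (derivative Φ).eval t) = Φ.eval h - Φ.eval 0 :=
    intervalIntegral.integral_deriv_eq_sub' (fun x => Φ.eval x)
      (funext fun x => Polynomial.deriv Φ)
      (fun x _ => (Φ.hasDerivAt x).differentiableAt)
      ((derivative Φ).continuous.continuousOn)
  have h0 : Φ.eval 0 = 0 := by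
    rw [hΦeval 0, hu0]; exact hg0 a
  have hH : Φ.eval h = 0 := by
    rw [hint2, h0] at hftc
    linarith
  rw [← hΦeval h]
  exact hH
end

section
/- Consider a single step of the line-integral method: polynomials u, v ∈ Π_s on [0,h] with u̇(ch) = M⁻¹ Σ_{j=0}^{s-1} P_j(c) γ_j(v) and v̇(ch) = Σ_{j=0}^{s-1} P_j(c) ψ_j(u) − Σ_{j=1}^{s} ℓ_j(c) ∇g(u(c_jh)) λ_j, u(0)=q_0, v(0)=p_0, where γ_j(v) = ∫₀¹P_j(ζ)v(ζh)dζ and ψ_j(u) = ∫₀¹P_j(ζ)∇U(u(ζh))dζ. If ∇g(u(c_ih))ᵀM⁻¹v(c_ih) = 0 for i = 1,...,s, then H(u(h),v(h)) = H(q_0,p_0), where H(q,p) = ½pᵀM⁻¹p − U(q). -/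
set_option maxHeartbeats 1000000

open Polynomial Matrix Finset

lemma li_natDegree_lt {p : Polynomial ℝ} {n : ℕ} (h1 : p.natDegree ≤ n)
    (h2 : p.coeff n = 0) (h3 : p ≠ 0) : p.natDegree < n := by
  rcases lt_or_eq_of_le h1 with hlt | heq
  · exact hlt
  · exact absurd (leadingCoeff_eq_zero.mp (by rw [leadingCoeff, heq]; exact h2)) h3

lemma li_orth (s : ℕ) (P : ℕ → Polynomial ℝ)
    (hdeg : ∀ j, (P j).natDegree = j)
    (horth : ∀ i j, (∫ x in (0:ℝ)..1, (P i).eval x * (P j).eval x) = if i = j then 1 else 0) :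
    ∀ (n : ℕ) (r : Polynomial ℝ), r.natDegree ≤ n → n < s →
      (∫ x in (0:ℝ)..1, (P s).eval x * r.eval x) = 0 := by
  intro n
  induction n using Nat.strong_induction_on with
  | _ n ih =>
  intro r hr hn
  by_cases h0 : r = 0
  · simp [h0]
  have hPd : P r.natDegree ≠ 0 := by
    intro hz
    have := horth r.natDegree r.natDegree
    simp [hz] at this
  have hc : (P r.natDegree).coeff r.natDegree ≠ 0 := by
    have h2 := mt leadingCoeff_eq_zero.mp hPd
    rwa [leadingCoeff, hdeg] at h2
  set d := r.natDegree with hd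
  set a := r.coeff d / (P d).coeff d with ha
  set r' := r - Polynomial.C a * P d with hr'
  have hrsum : r = Polynomial.C a * P d + r' := by ring
  have hcoeffd : r'.coeff d = 0 := by
    simp only [hr', coeff_sub, coeff_C_mul, ha]
    field_simp
    ring
  have hdle : r'.natDegree ≤ d := by
    refine le_trans (natDegree_sub_le _ _) (max_le le_rfl ?_)
    exact le_trans (natDegree_C_mul_le _ _) (le_of_eq (hdeg d))
  have hsplit : (∫ x in (0:ℝ)..1, (P s).eval x * r.eval x)
      = a * (∫ x in (0:ℝ)..1, (P s).eval x * (P d).eval x)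
        + ∫ x in (0:ℝ)..1, (P s).eval x * r'.eval x := by
    rw [← intervalIntegral.integral_const_mul, ← intervalIntegral.integral_add]
    · apply intervalIntegral.integral_congr
      intro x _
      conv_lhs => rw [hrsum]
      simp [eval_add, eval_mul]
      ring
    · exact (continuous_const.mul ((P s).continuous.mul (P d).continuous)).intervalIntegrable _ _
    · exact ((P s).continuous.mul r'.continuous).intervalIntegrable _ _
  rw [hsplit, horth s d, if_neg (by omega : ¬ s = d), mul_zero, zero_add]
  by_cases h0' : r' = 0
  · simp [h0']
  · have hlt : r'.natDegree < d := li_natDegree_lt hdle hcoeffd h0'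
    exact ih r'.natDegree (lt_of_lt_of_le hlt hr) r' le_rfl (by omega)

lemma li_fact (s : ℕ) (hs : 0 < s) (P : ℕ → Polynomial ℝ)
    (hdeg : ∀ j, (P j).natDegree = j)
    (c : Fin s → ℝ) (hinj : Function.Injective c)
    (hzero : ∀ i, (P s).eval (c i) = 0) :
    P s = Polynomial.C ((P s).leadingCoeff) * ∏ k, (Polynomial.X - Polynomial.C (c k)) := by
  set Q : Polynomial ℝ := ∏ k, (Polynomial.X - Polynomial.C (c k)) with hQ
  have hQmonic : Q.Monic := monic_prod_of_monic _ _ fun k _ => monic_X_sub_C _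
  have hQdeg : Q.natDegree = s := by
    rw [hQ, natDegree_prod _ _ (fun k _ => X_sub_C_ne_zero _)]
    simp
  have hPs : P s ≠ 0 := by
    intro hz
    have := hdeg s
    rw [hz, natDegree_zero] at this
    omega
  set D : Polynomial ℝ := P s - Polynomial.C ((P s).leadingCoeff) * Q with hD
  have hDzero : D = 0 := by
    by_contra hne
    have heval : ∀ i, D.eval (c i) = 0 := by
      intro i
      simp only [hD, eval_sub, eval_mul, eval_C, hzero i, hQ, eval_prod, eval_sub, eval_X, eval_C]
      rw [Finset.prod_eq_zero (Finset.mem_univ i) (by ring)]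
      ring
    have hcs : D.coeff s = 0 := by
      have h1 : (P s).coeff s = (P s).leadingCoeff := by rw [leadingCoeff, hdeg]
      have h2 : (Polynomial.C ((P s).leadingCoeff) * Q).coeff s
          = (P s).leadingCoeff := by
        rw [coeff_C_mul]
        have : Q.coeff s = 1 := by
          have := hQmonic.leadingCoeff
          rwa [leadingCoeff, hQdeg] at this
        rw [this, mul_one]
      simp [hD, coeff_sub, h1, h2]
    have hdle : D.natDegree ≤ s := by
      refine le_trans (natDegree_sub_le _ _) (max_le (le_of_eq (hdeg s)) ?_)
      exact le_trans (natDegree_C_mul_le _ _) (le_of_eq hQdeg)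
    have hlt : D.natDegree < s := li_natDegree_lt hdle hcs hne
    exact hne (Polynomial.eq_zero_of_natDegree_lt_card_of_eval_eq_zero D hinj heval
      (by simpa using hlt))
  have := sub_eq_zero.mp hDzero
  linear_combination this

lemma li_Bterm (s : ℕ) (hs : 0 < s) (P : ℕ → Polynomial ℝ)
    (hdeg : ∀ j, (P j).natDegree = j)
    (horth : ∀ i j, (∫ x in (0:ℝ)..1, (P i).eval x * (P j).eval x) = if i = j then 1 else 0)
    (c : Fin s → ℝ) (hinj : Function.Injective c)
    (hzero : ∀ i, (P s).eval (c i) = 0)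
    (i : Fin s) (Φ : Polynomial ℝ) (hΦdeg : Φ.natDegree ≤ s) (hroot : Φ.eval (c i) = 0) :
    (∫ x in (0:ℝ)..1, (∏ k ∈ Finset.univ.erase i, ((x - c k) / (c i - c k))) * Φ.eval x) = 0 := by
  obtain ⟨ρ, hρ⟩ := (dvd_iff_isRoot.mpr hroot : (Polynomial.X - Polynomial.C (c i)) ∣ Φ)
  by_cases hρ0 : ρ = 0
  · simp [hρ, hρ0]
  have hρdeg : ρ.natDegree < s := by
    have h1 : Φ.natDegree = 1 + ρ.natDegree := by
      rw [hρ, natDegree_mul (X_sub_C_ne_zero _) hρ0, natDegree_X_sub_C]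
    omega
  have hPs : P s ≠ 0 := by
    intro hz
    have := hdeg s
    rw [hz, natDegree_zero] at this
    omega
  have hb : (P s).leadingCoeff ≠ 0 := fun hz => hPs (leadingCoeff_eq_zero.mp hz)
  set b := (P s).leadingCoeff with hbdef
  set D : ℝ := ∏ k ∈ Finset.univ.erase i, (c i - c k)⁻¹ with hD
  have hpt : ∀ x : ℝ, (∏ k ∈ Finset.univ.erase i, ((x - c k) / (c i - c k))) * Φ.eval x
      = (D * b⁻¹) * ((P s).eval x * ρ.eval x) := by
    intro x
    have h1 : (∏ k ∈ Finset.univ.erase i, ((x - c k) / (c i - c k)))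
        = (∏ k ∈ Finset.univ.erase i, (x - c k)) * D := by
      rw [hD, ← Finset.prod_mul_distrib]
      exact Finset.prod_congr rfl fun k _ => div_eq_mul_inv _ _
    have h2 : (∏ k ∈ Finset.univ.erase i, (x - c k)) * (x - c i)
        = ∏ k, (x - c k) := Finset.prod_erase_mul _ _ (Finset.mem_univ i)
    have h3 : (P s).eval x = b * ∏ k, (x - c k) := by
      conv_lhs => rw [li_fact s hs P hdeg c hinj hzero]
      simp [eval_prod]
      exact Or.inl hbdef.symm
    rw [h1, hρ]
    simp only [eval_mul, eval_sub, eval_X, eval_C]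
    rw [h3]
    field_simp
    ring_nf
    rw [← h2]
    ring
  rw [intervalIntegral.integral_congr (fun x _ => hpt x),
    intervalIntegral.integral_const_mul,
    li_orth s P hdeg horth ρ.natDegree ρ le_rfl hρdeg, mul_zero]
/-- Energy conservation for one step of the line-integral method: if `u, v ∈ Π_s` on
`[0,h]` satisfy `u̇(ch) = M⁻¹ Σ_{j<s} P_j(c)γ_j(v)`,
`v̇(ch) = Σ_{j<s} P_j(c)ψ_j(u) − Σ_i ℓ_i(c)∇g(u(c_ih))λ_i`, `u(0)=q₀`, `v(0)=p₀`,
and the discrete hidden constraints `∇g(u(c_ih))ᵀM⁻¹v(c_ih) = 0` hold, then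
`H(u(h),v(h)) = H(q₀,p₀)` for `H(q,p) = ½pᵀM⁻¹p − U(q)`. -/
theorem stmt9 (s m ν : ℕ) (hs : 0 < s) (h : ℝ) (hh : 0 < h)
    (P : ℕ → Polynomial ℝ)
    (hdeg : ∀ j, (P j).natDegree = j)
    (horth : ∀ i j, (∫ x in (0:ℝ)..1, (P i).eval x * (P j).eval x)
      = if i = j then 1 else 0)
    (c : Fin s → ℝ) (hmono : StrictMono c)
    (hmem : ∀ i, c i ∈ Set.Ioo (0:ℝ) 1)
    (hzero : ∀ i, (P s).eval (c i) = 0)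
    (M : Matrix (Fin m) (Fin m) ℝ) (hM : M.PosDef)
    (U : (Fin m → ℝ) → ℝ) (hU : ContDiff ℝ (⊤ : ℕ∞) U)
    (g : (Fin m → ℝ) → (Fin ν → ℝ)) (hg : ContDiff ℝ (⊤ : ℕ∞) g)
    (gradU : (Fin m → ℝ) → Fin m → ℝ)
    (hgradU : ∀ x k, gradU x k = fderiv ℝ U x (Pi.single k 1))
    (Jg : (Fin m → ℝ) → Matrix (Fin m) (Fin ν) ℝ)
    (hJg : ∀ x k a, Jg x k a = fderiv ℝ (fun y => g y a) x (Pi.single k 1))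
    (q0 p0 : Fin m → ℝ) (lam : Fin s → Fin ν → ℝ)
    (u v : Fin m → Polynomial ℝ)
    (hudeg : ∀ k, (u k).natDegree ≤ s) (hvdeg : ∀ k, (v k).natDegree ≤ s)
    (uval vval : ℝ → Fin m → ℝ)
    (huval : ∀ t k, uval t k = (u k).eval t)
    (hvval : ∀ t k, vval t k = (v k).eval t)
    (hu0 : uval 0 = q0) (hv0 : vval 0 = p0)
    (γ ψ : ℕ → Fin m → ℝ)
    (hγ : ∀ j k, γ j k = ∫ x in (0:ℝ)..1, (P j).eval x * vval (x * h) k)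
    (hψ : ∀ j k, ψ j k = ∫ x in (0:ℝ)..1, (P j).eval x * gradU (uval (x * h)) k)
    (ℓ : Fin s → ℝ → ℝ)
    (hℓ : ∀ i (x : ℝ), ℓ i x = ∏ k ∈ Finset.univ.erase i, ((x - c k) / (c i - c k)))
    (hode_u : ∀ x ∈ Set.Icc (0:ℝ) 1, ∀ k,
      (Polynomial.derivative (u k)).eval (x * h)
        = ∑ j ∈ Finset.range s, (P j).eval x * (M⁻¹.mulVec (γ j)) k)
    (hode_v : ∀ x ∈ Set.Icc (0:ℝ) 1, ∀ k,
      (Polynomial.derivative (v k)).eval (x * h)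
        = ∑ j ∈ Finset.range s, (P j).eval x * ψ j k
          - ∑ i, ℓ i x * ((Jg (uval (c i * h))).mulVec (lam i)) k)
    (hhid : ∀ i : Fin s,
      (Jg (uval (c i * h))).transpose.mulVec (M⁻¹.mulVec (vval (c i * h))) = 0) :
    (1/2) * (vval h ⬝ᵥ M⁻¹.mulVec (vval h)) - U (uval h)
      = (1/2) * (p0 ⬝ᵥ M⁻¹.mulVec p0) - U q0 := by
  classical
  have hinj : Function.Injective c := hmono.injective
  obtain ⟨N, hNdef⟩ : ∃ N' : Matrix (Fin m) (Fin m) ℝ, N' = M⁻¹ := ⟨_, rfl⟩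
  rw [← hNdef] at hode_u hhid ⊢
  -- symmetry of N
  have hNt : Nᵀ = N := by
    rw [hNdef, Matrix.transpose_nonsing_inv, show Mᵀ = M from hM.isHermitian.eq]
  have hNsymm : ∀ k l, N k l = N l k := by
    intro k l
    conv_lhs => rw [← hNt]
    rfl
  have hsym : ∀ a b : Fin m → ℝ, a ⬝ᵥ N.mulVec b = b ⬝ᵥ N.mulVec a := by
    intro a b
    simp only [dotProduct, Matrix.mulVec, Finset.mul_sum]
    rw [Finset.sum_comm]
    exact Finset.sum_congr rfl fun k _ => Finset.sum_congr rfl fun l _ => by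
      rw [hNsymm l k]; ring
  have hdsum : ∀ {ι : Type} (t : Finset ι) (a : Fin m → ℝ) (f : ι → Fin m → ℝ),
      a ⬝ᵥ N.mulVec (∑ j ∈ t, f j) = ∑ j ∈ t, a ⬝ᵥ N.mulVec (f j) := by
    intro ι t a f
    induction t using Finset.cons_induction with
    | empty => simp
    | cons i t hi ih =>
      rw [Finset.sum_cons, Matrix.mulVec_add, dotProduct_add, ih, Finset.sum_cons]
  -- basic continuity
  have hVcomp : ∀ k, (fun x : ℝ => vval (x*h) k) = fun x => (v k).eval (x*h) :=
    fun k => _root_.funext fun x => hvval _ _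
  have hUcomp : ∀ k, (fun x : ℝ => uval (x*h) k) = fun x => (u k).eval (x*h) :=
    fun k => _root_.funext fun x => huval _ _
  have hVcont : ∀ k, Continuous (fun x : ℝ => vval (x*h) k) := by
    intro k
    rw [hVcomp k]
    exact (v k).continuous.comp (continuous_id.mul continuous_const)
  have hUcont : ∀ k, Continuous (fun x : ℝ => uval (x*h) k) := by
    intro k
    rw [hUcomp k]
    exact (u k).continuous.comp (continuous_id.mul continuous_const)
  have hUcurve : Continuous (fun x : ℝ => uval (x*h)) := continuous_pi hUcont
  have hgradUc : ∀ k, Continuous (fun p : Fin m → ℝ => gradU p k) := by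
    intro k
    have he : (fun p : Fin m → ℝ => gradU p k)
        = fun p => (fderiv ℝ U p) (Pi.single k 1) := _root_.funext fun p => hgradU p k
    rw [he]
    exact (hU.continuous_fderiv (by simp)).clm_apply continuous_const
  have hgUc : ∀ k, Continuous (fun x : ℝ => gradU (uval (x*h)) k) :=
    fun k => (hgradUc k).comp hUcurve
  have hVdc : ∀ k, Continuous (fun x : ℝ => (Polynomial.derivative (v k)).eval (x*h) * h) :=
    fun k => ((Polynomial.derivative (v k)).continuous.comp
      (continuous_id.mul continuous_const)).mul continuous_const
  have hUdc : ∀ k, Continuous (fun x : ℝ => (Polynomial.derivative (u k)).eval (x*h) * h) :=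
    fun k => ((Polynomial.derivative (u k)).continuous.comp
      (continuous_id.mul continuous_const)).mul continuous_const
  have hdotcont : ∀ (a b : ℝ → Fin m → ℝ), (∀ k, Continuous fun x => a x k) →
      (∀ k, Continuous fun x => b x k) →
      Continuous fun x => a x ⬝ᵥ N.mulVec (b x) := by
    intro a b ha hb
    simp only [dotProduct, Matrix.mulVec]
    exact continuous_finset_sum _ fun k _ => (ha k).mul
      (continuous_finset_sum _ fun l _ => continuous_const.mul (hb l))
  have hℓcont : ∀ i, Continuous (ℓ i) := by
    intro i
    have he : ℓ i = fun x => ∏ k ∈ Finset.univ.erase i, ((x - c k) / (c i - c k)) :=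
      _root_.funext fun x => hℓ i x
    rw [he]
    exact continuous_finset_prod _ fun k _ =>
      (continuous_id.sub continuous_const).div_const _
  -- derivatives
  have hVd : ∀ k (x : ℝ), HasDerivAt (fun x => vval (x*h) k)
      ((Polynomial.derivative (v k)).eval (x*h) * h) x := by
    intro k x
    rw [hVcomp k]
    exact ((v k).hasDerivAt (x*h)).comp x (hasDerivAt_mul_const h)
  have hUd : ∀ k (x : ℝ), HasDerivAt (fun x => uval (x*h) k)
      ((Polynomial.derivative (u k)).eval (x*h) * h) x := by
    intro k x
    rw [hUcomp k]
    exact ((u k).hasDerivAt (x*h)).comp x (hasDerivAt_mul_const h)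
  have hfd : ∀ (p w : Fin m → ℝ), fderiv ℝ U p w = ∑ k, w k * gradU p k := by
    intro p w
    have hw : w = ∑ k, w k • (Pi.single k 1 : Fin m → ℝ) := by
      conv_lhs => rw [← Finset.univ_sum_single w]
      refine Finset.sum_congr rfl fun k _ => ?_
      rw [← Pi.single_smul, smul_eq_mul, mul_one]
    conv_lhs => rw [hw]
    rw [map_sum]
    refine Finset.sum_congr rfl fun k _ => ?_
    rw [_root_.map_smul, smul_eq_mul, hgradU]
  -- the derivative of the energy
  set F : ℝ → ℝ := fun x =>
    (vval (x*h) ⬝ᵥ N.mulVec (fun k => (Polynomial.derivative (v k)).eval (x*h) * h))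
    - ∑ k, gradU (uval (x*h)) k * ((Polynomial.derivative (u k)).eval (x*h) * h) with hFdef
  have hquad : (fun x : ℝ => (1/2) * (vval (x*h) ⬝ᵥ N.mulVec (vval (x*h))))
      = fun x => ∑ k, ∑ l, (1/2 * N k l) * (vval (x*h) k * vval (x*h) l) := by
    funext x
    simp only [dotProduct, Matrix.mulVec, Finset.mul_sum]
    refine Finset.sum_congr rfl fun k _ => Finset.sum_congr rfl fun l _ => by ring
  have part1 : ∀ x : ℝ, HasDerivAt (fun x => (1/2) * (vval (x*h) ⬝ᵥ N.mulVec (vval (x*h))))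
      (vval (x*h) ⬝ᵥ N.mulVec (fun k => (Polynomial.derivative (v k)).eval (x*h) * h)) x := by
    intro x
    rw [hquad]
    have hder : HasDerivAt
        (fun x => ∑ k, ∑ l, (1/2 * N k l) * (vval (x*h) k * vval (x*h) l))
        (∑ k, ∑ l, (1/2 * N k l) * (((Polynomial.derivative (v k)).eval (x*h) * h) * vval (x*h) l
          + vval (x*h) k * ((Polynomial.derivative (v l)).eval (x*h) * h))) x := by
      refine HasDerivAt.fun_sum fun k _ => HasDerivAt.fun_sum fun l _ => ?_
      exact ((hVd k x).mul (hVd l x)).const_mul _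
    convert hder using 1
    have hswap : ∑ k, ∑ l, (1/2 * N k l) *
          (((Polynomial.derivative (v k)).eval (x*h) * h) * vval (x*h) l)
        = ∑ k, ∑ l, (1/2 * N k l) *
          (vval (x*h) k * ((Polynomial.derivative (v l)).eval (x*h) * h)) := by
      rw [Finset.sum_comm]
      exact Finset.sum_congr rfl fun l _ => Finset.sum_congr rfl fun k _ => by
        rw [hNsymm k l]; ring
    have hsplit : ∀ k l : Fin m, (1/2 * N k l) *
          (((Polynomial.derivative (v k)).eval (x*h) * h) * vval (x*h) l
            + vval (x*h) k * ((Polynomial.derivative (v l)).eval (x*h) * h))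
        = (1/2 * N k l) * (((Polynomial.derivative (v k)).eval (x*h) * h) * vval (x*h) l)
          + (1/2 * N k l) * (vval (x*h) k * ((Polynomial.derivative (v l)).eval (x*h) * h)) :=
      fun k l => by ring
    simp only [hsplit, Finset.sum_add_distrib, hswap]
    rw [← two_mul]
    simp only [dotProduct, Matrix.mulVec, Finset.mul_sum]
    refine Finset.sum_congr rfl fun k _ => Finset.sum_congr rfl fun l _ => by ring
  have part2 : ∀ x : ℝ, HasDerivAt (fun x => U (uval (x*h)))
      (∑ k, gradU (uval (x*h)) k * ((Polynomial.derivative (u k)).eval (x*h) * h)) x := by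
    intro x
    have hcurve : HasDerivAt (fun x => uval (x*h))
        (fun k => (Polynomial.derivative (u k)).eval (x*h) * h) x :=
      hasDerivAt_pi.mpr fun k => hUd k x
    have hfU : HasFDerivAt U (fderiv ℝ U (uval (x*h))) (uval (x*h)) :=
      (hU.differentiable (by simp) (uval (x*h))).hasFDerivAt
    have hcomp := hfU.comp_hasDerivAt x hcurve
    rw [hfd] at hcomp
    exact hcomp.congr_deriv (Finset.sum_congr rfl fun k _ => by ring)
  have hE : ∀ x : ℝ, HasDerivAt
      (fun x => (1/2) * (vval (x*h) ⬝ᵥ N.mulVec (vval (x*h))) - U (uval (x*h))) (F x) x :=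
    fun x => (part1 x).sub (part2 x)
  have hFcont : Continuous F := by
    rw [hFdef]
    exact (hdotcont (fun x => vval (x*h)) (fun x k => (Polynomial.derivative (v k)).eval (x*h) * h) hVcont hVdc).sub
      (continuous_finset_sum _ fun k _ => (hgUc k).mul (hUdc k))
  have hFTC : (∫ x in (0:ℝ)..1, F x)
      = ((1/2) * (vval h ⬝ᵥ N.mulVec (vval h)) - U (uval h))
        - ((1/2) * (p0 ⬝ᵥ N.mulVec p0) - U q0) := by
    rw [intervalIntegral.integral_eq_sub_of_hasDerivAt (fun x _ => hE x)
      (hFcont.intervalIntegrable _ _)]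
    rw [one_mul, zero_mul, hu0, hv0]
  -- the constraint vectors
  set w : Fin s → Fin m → ℝ := fun i => (Jg (uval (c i * h))).mulVec (lam i) with hwdef
  -- zero integral for the constraint terms
  have hB : ∀ i : Fin s,
      (∫ x in (0:ℝ)..1, ℓ i x * (vval (x*h) ⬝ᵥ N.mulVec (w i))) = 0 := by
    intro i
    set Φ : Polynomial ℝ := ∑ k, Polynomial.C ((N.mulVec (w i)) k)
      * ((v k).comp (Polynomial.C h * Polynomial.X)) with hΦ
    have hΦeval : ∀ x : ℝ, Φ.eval x = vval (x*h) ⬝ᵥ N.mulVec (w i) := by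
      intro x
      simp only [hΦ, eval_finset_sum, eval_mul, eval_C, eval_comp, eval_X, dotProduct]
      exact Finset.sum_congr rfl fun k _ => by rw [hvval, mul_comm h x]; ring
    have hΦdeg : Φ.natDegree ≤ s := by
      refine Polynomial.natDegree_sum_le_of_forall_le _ _ fun k _ => ?_
      refine le_trans (natDegree_C_mul_le _ _) ?_
      rw [natDegree_comp]
      have h1 : (Polynomial.C h * Polynomial.X).natDegree = 1 := by
        rw [natDegree_C_mul (ne_of_gt hh), natDegree_X]
      rw [h1, mul_one]
      exact hvdeg k
    have hΦroot : Φ.eval (c i) = 0 := by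
      rw [hΦeval, hsym]
      rw [hwdef]
      rw [dotProduct_comm, Matrix.dotProduct_mulVec, ← Matrix.mulVec_transpose,
        hhid i, zero_dotProduct]
    have hkey := li_Bterm s hs P hdeg horth c hinj hzero i Φ hΦdeg hΦroot
    refine Eq.trans ?_ hkey
    apply intervalIntegral.integral_congr
    intro x _
    dsimp only
    rw [hℓ, hΦeval]
  -- linear expansions of the derivatives via the collocation conditions
  have hTveq : ∀ x ∈ Set.Icc (0:ℝ) 1,
      (vval (x*h) ⬝ᵥ N.mulVec (fun k => (Polynomial.derivative (v k)).eval (x*h) * h))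
      = h * ((∑ j ∈ Finset.range s, (P j).eval x * (vval (x*h) ⬝ᵥ N.mulVec (ψ j)))
        - ∑ i, ℓ i x * (vval (x*h) ⬝ᵥ N.mulVec (w i))) := by
    intro x hx
    have hvec : (fun k => (Polynomial.derivative (v k)).eval (x*h) * h)
        = h • ((∑ j ∈ Finset.range s, (P j).eval x • ψ j) - ∑ i, ℓ i x • w i) := by
      funext k
      simp only [Pi.smul_apply, Pi.sub_apply, Finset.sum_apply, smul_eq_mul, hwdef]
      rw [hode_v x hx k]
      ring
    rw [hvec, Matrix.mulVec_smul, dotProduct_smul, smul_eq_mul]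
    congr 1
    rw [Matrix.mulVec_sub, dotProduct_sub, hdsum, hdsum]
    congr 1
    · exact Finset.sum_congr rfl fun j _ => by
        rw [Matrix.mulVec_smul, dotProduct_smul, smul_eq_mul]
    · exact Finset.sum_congr rfl fun i _ => by
        rw [Matrix.mulVec_smul, dotProduct_smul, smul_eq_mul]
  have hTueq : ∀ x ∈ Set.Icc (0:ℝ) 1,
      (∑ k, gradU (uval (x*h)) k * ((Polynomial.derivative (u k)).eval (x*h) * h))
      = h * (∑ j ∈ Finset.range s, (P j).eval x * (gradU (uval (x*h)) ⬝ᵥ N.mulVec (γ j))) := by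
    intro x hx
    have : ∀ k, (Polynomial.derivative (u k)).eval (x*h)
        = ∑ j ∈ Finset.range s, (P j).eval x * (N.mulVec (γ j)) k := by
      intro k
      exact hode_u x hx k
    simp only [this, dotProduct, Finset.mul_sum, Finset.sum_mul]
    rw [Finset.sum_comm]
    refine Finset.sum_congr rfl fun j _ => Finset.sum_congr rfl fun k _ => by ring
  -- integral identities
  have hintA : (∫ x in (0:ℝ)..1,
        ∑ j ∈ Finset.range s, (P j).eval x * (vval (x*h) ⬝ᵥ N.mulVec (ψ j)))
      = ∑ j ∈ Finset.range s, (γ j ⬝ᵥ N.mulVec (ψ j)) := by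
    rw [intervalIntegral.integral_finset_sum]
    · refine Finset.sum_congr rfl fun j _ => ?_
      have heq : ∀ x : ℝ, (P j).eval x * (vval (x*h) ⬝ᵥ N.mulVec (ψ j))
          = ∑ k, ((P j).eval x * vval (x*h) k) * (N.mulVec (ψ j)) k := by
        intro x
        simp only [dotProduct, Finset.mul_sum]
        exact Finset.sum_congr rfl fun k _ => by ring
      rw [intervalIntegral.integral_congr (fun x _ => heq x),
        intervalIntegral.integral_finset_sum]
      · simp only [dotProduct]
        refine Finset.sum_congr rfl fun k _ => ?_
        rw [intervalIntegral.integral_mul_const, hγ]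
      · intro k _
        exact ((((P j).continuous.mul (hVcont k)).mul continuous_const)).intervalIntegrable _ _
    · intro j _
      exact ((P j).continuous.mul (hdotcont (fun x => vval (x*h)) (fun _ => ψ j)
        hVcont (fun k => continuous_const))).intervalIntegrable _ _
  have hintC : (∫ x in (0:ℝ)..1,
        ∑ j ∈ Finset.range s, (P j).eval x * (gradU (uval (x*h)) ⬝ᵥ N.mulVec (γ j)))
      = ∑ j ∈ Finset.range s, (ψ j ⬝ᵥ N.mulVec (γ j)) := by
    rw [intervalIntegral.integral_finset_sum]
    · refine Finset.sum_congr rfl fun j _ => ?_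
      have heq : ∀ x : ℝ, (P j).eval x * (gradU (uval (x*h)) ⬝ᵥ N.mulVec (γ j))
          = ∑ k, ((P j).eval x * gradU (uval (x*h)) k) * (N.mulVec (γ j)) k := by
        intro x
        simp only [dotProduct, Finset.mul_sum]
        exact Finset.sum_congr rfl fun k _ => by ring
      rw [intervalIntegral.integral_congr (fun x _ => heq x),
        intervalIntegral.integral_finset_sum]
      · simp only [dotProduct]
        refine Finset.sum_congr rfl fun k _ => ?_
        rw [intervalIntegral.integral_mul_const, hψ]
      · intro k _
        exact ((((P j).continuous.mul (hgUc k)).mul continuous_const)).intervalIntegrable _ _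
    · intro j _
      exact ((P j).continuous.mul (hdotcont (fun x => gradU (uval (x*h))) (fun _ => γ j)
        hgUc (fun k => continuous_const))).intervalIntegrable _ _
  have hintB : (∫ x in (0:ℝ)..1, ∑ i, ℓ i x * (vval (x*h) ⬝ᵥ N.mulVec (w i))) = 0 := by
    rw [intervalIntegral.integral_finset_sum]
    · exact Finset.sum_eq_zero fun i _ => hB i
    · intro i _
      exact ((hℓcont i).mul (hdotcont (fun x => vval (x*h)) (fun _ => w i)
        hVcont (fun k => continuous_const))).intervalIntegrable _ _
  -- put it together: the integral of F is zero
  have hFzero : (∫ x in (0:ℝ)..1, F x) = 0 := by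
    have hFeq : Set.EqOn F (fun x =>
        h * ((∑ j ∈ Finset.range s, (P j).eval x * (vval (x*h) ⬝ᵥ N.mulVec (ψ j)))
          - ∑ i, ℓ i x * (vval (x*h) ⬝ᵥ N.mulVec (w i)))
        - h * (∑ j ∈ Finset.range s, (P j).eval x * (gradU (uval (x*h)) ⬝ᵥ N.mulVec (γ j))))
        (Set.uIcc 0 1) := by
      intro x hx
      have hx' : x ∈ Set.Icc (0:ℝ) 1 := by
        rwa [Set.uIcc_of_le (by norm_num : (0:ℝ) ≤ 1)] at hx
      simp only [hFdef]
      rw [hTveq x hx', hTueq x hx']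
    rw [intervalIntegral.integral_congr hFeq]
    rw [intervalIntegral.integral_sub, intervalIntegral.integral_const_mul,
      intervalIntegral.integral_const_mul, intervalIntegral.integral_sub, hintA, hintB, hintC]
    · have : ∑ j ∈ Finset.range s, (γ j ⬝ᵥ N.mulVec (ψ j))
          = ∑ j ∈ Finset.range s, (ψ j ⬝ᵥ N.mulVec (γ j)) :=
        Finset.sum_congr rfl fun j _ => hsym _ _
      rw [this]
      ring
    · exact (continuous_finset_sum _ fun j _ => (P j).continuous.mul
        (hdotcont (fun x => vval (x*h)) (fun _ => ψ j) hVcont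
          (fun k => continuous_const))).intervalIntegrable _ _
    · exact (continuous_finset_sum _ fun i _ => (hℓcont i).mul
        (hdotcont (fun x => vval (x*h)) (fun _ => w i) hVcont
          (fun k => continuous_const))).intervalIntegrable _ _
    · exact (continuous_const.mul ((continuous_finset_sum _ fun j _ => (P j).continuous.mul
        (hdotcont (fun x => vval (x*h)) (fun _ => ψ j) hVcont
          (fun k => continuous_const))).sub
        (continuous_finset_sum _ fun i _ => (hℓcont i).mul
          (hdotcont (fun x => vval (x*h)) (fun _ => w i) hVcont
            (fun k => continuous_const))))).intervalIntegrable _ _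
    · exact (continuous_const.mul (continuous_finset_sum _ fun j _ => (P j).continuous.mul
        (hdotcont (fun x => gradU (uval (x*h))) (fun _ => γ j) hgUc
          (fun k => continuous_const)))).intervalIntegrable _ _
  rw [hFzero] at hFTC
  linarith [hFTC]
end

section
/- For any sufficiently smooth function G: [0,1] → ℝ^d and j ∈ {0,...,s−1}, the Gauss–Legendre quadrature error for the weighted integral satisfies ∫₀¹ P_j(c)G(ch)dc − Σ_{i=1}^s b_i P_j(c_i)G(c_ih) = O(h^{2s−j}) as h → 0⁺. -/
open Polynomial Matrix Finset
lemma aux_int_poly (p q : Polynomial ℝ) :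
    IntervalIntegrable (fun x => p.eval x * q.eval x) MeasureTheory.volume 0 1 :=
  (p.continuous_aeval.mul q.continuous_aeval).intervalIntegrable 0 1

lemma aux_orth (s : ℕ) (P : ℕ → Polynomial ℝ)
    (hdeg : ∀ j, (P j).natDegree = j)
    (horth : ∀ i j, (∫ x in (0:ℝ)..1, (P i).eval x * (P j).eval x)
      = if i = j then 1 else 0) :
    ∀ (n : ℕ) (q : Polynomial ℝ), q.natDegree ≤ n → n < s →
      (∫ x in (0:ℝ)..1, (P s).eval x * q.eval x) = 0 := by
  have hPne : ∀ m, P m ≠ 0 := by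
    intro m hm
    have := horth m m
    simp [hm] at this
  have hint : ∀ p q : Polynomial ℝ,
      IntervalIntegrable (fun x => p.eval x * q.eval x) MeasureTheory.volume 0 1 := by
    intro p q
    exact ((p.continuous).mul (q.continuous)).intervalIntegrable 0 1
  intro n
  induction n with
  | zero =>
    intro q hq hns
    obtain ⟨a, ha⟩ := Polynomial.natDegree_eq_zero.mp (Nat.le_zero.mp hq)
    obtain ⟨p0, hp0⟩ := Polynomial.natDegree_eq_zero.mp (hdeg 0)
    have hp0ne : p0 ≠ 0 := by
      intro h; apply hPne 0; rw [← hp0, h, map_zero]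
    have h0 := horth s 0
    rw [if_neg (by omega)] at h0
    have key : (fun x => (P s).eval x * q.eval x)
        = fun x => (a / p0) * ((P s).eval x * (P 0).eval x) := by
      funext x
      rw [← ha, ← hp0]
      simp only [Polynomial.eval_C]
      field_simp
    rw [key, intervalIntegral.integral_const_mul, h0, mul_zero]
  | succ n ih =>
    intro q hq hns
    by_cases hq0 : q = 0
    · simp [hq0]
    by_cases hqn : q.natDegree ≤ n
    · exact ih q hqn (by omega)
    have hm : q.natDegree = n + 1 := le_antisymm hq (not_le.mp hqn)
    set m := n + 1 with hmdef
    have hlc : (P m).leadingCoeff ≠ 0 := Polynomial.leadingCoeff_ne_zero.mpr (hPne m)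
    set a := q.leadingCoeff / (P m).leadingCoeff with hadef
    have ha : a ≠ 0 := div_ne_zero (Polynomial.leadingCoeff_ne_zero.mpr hq0) hlc
    set q' := q - Polynomial.C a * P m with hq'def
    have hdegq : q.degree = (m : ℕ) := by
      rw [Polynomial.degree_eq_natDegree hq0, hm]
    have hdegPm : (P m).degree = (m : ℕ) := by
      rw [Polynomial.degree_eq_natDegree (hPne m), hdeg m]
    have hdeglt : q'.degree < q.degree := by
      have := Polynomial.degree_sub_lt
        (p := q) (q := Polynomial.C a * P m) ?_ hq0 ?_
      · exact this
      · rw [Polynomial.degree_C_mul ha, hdegPm, hdegq]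
      · rw [Polynomial.leadingCoeff_mul, Polynomial.leadingCoeff_C, hadef]
        field_simp
    have hq'deg : q'.natDegree ≤ n := by
      rcases eq_or_ne q' 0 with h | h
      · simp [h]
      · have : q'.natDegree < m := by
          rw [Polynomial.natDegree_lt_iff_degree_lt h]
          calc q'.degree < q.degree := hdeglt
            _ = (m : ℕ) := hdegq
        omega
    have h1 := horth s m
    rw [if_neg (by omega)] at h1
    have h2 := ih q' hq'deg (by omega)
    have hqe : q = Polynomial.C a * P m + q' := by rw [hq'def]; ring
    have key : (fun x => (P s).eval x * q.eval x)
        = fun x => a * ((P s).eval x * (P m).eval x) + (P s).eval x * q'.eval x := by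
      funext x
      conv_lhs => rw [hqe]
      simp only [Polynomial.eval_add, Polynomial.eval_mul, Polynomial.eval_C]
      ring
    rw [key, intervalIntegral.integral_add ((hint (P s) (P m)).const_mul a) (hint (P s) q'),
      intervalIntegral.integral_const_mul, h1, h2, mul_zero, add_zero]

lemma aux_weight (s : ℕ) (c : Fin s → ℝ) (b : Fin s → ℝ)
    (hb : ∀ j, b j = ∫ x in (0:ℝ)..1,
      ∏ k ∈ Finset.univ.erase j, ((x - c k) / (c j - c k))) :
    ∀ i, b i = ∫ x in (0:ℝ)..1, (Lagrange.basis Finset.univ c i).eval x := by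
  intro i
  rw [hb i]
  congr 1
  funext x
  rw [Lagrange.basis, Polynomial.eval_prod]
  refine Finset.prod_congr rfl fun k _ => ?_
  simp only [Lagrange.basisDivisor, Polynomial.eval_mul, Polynomial.eval_C,
    Polynomial.eval_sub, Polynomial.eval_X]
  rw [div_eq_mul_inv, mul_comm]

lemma aux_exact_lt (s : ℕ) (c : Fin s → ℝ) (hinj : Function.Injective c)
    (b : Fin s → ℝ)
    (hb : ∀ j, b j = ∫ x in (0:ℝ)..1,
      ∏ k ∈ Finset.univ.erase j, ((x - c k) / (c j - c k))) :
    ∀ q : Polynomial ℝ, q.degree < (s : ℕ) →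
      (∫ x in (0:ℝ)..1, q.eval x) = ∑ i, b i * q.eval (c i) := by
  intro q hdegq
  have hinj' : Set.InjOn c ↑(Finset.univ : Finset (Fin s)) := hinj.injOn
  have hcard : (#(Finset.univ : Finset (Fin s))) = s := by simp
  have hq := Lagrange.eq_interpolate (s := Finset.univ) (v := c) hinj'
    (by rw [hcard]; exact hdegq)
  conv_lhs => rw [hq]
  rw [Lagrange.interpolate_apply]
  have : (fun x => Polynomial.eval x
      (∑ i : Fin s, Polynomial.C (q.eval (c i)) * Lagrange.basis Finset.univ c i))
      = fun x => ∑ i : Fin s, q.eval (c i) * (Lagrange.basis Finset.univ c i).eval x := by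
    funext x
    rw [Polynomial.eval_finset_sum]
    exact Finset.sum_congr rfl fun i _ => by
      rw [Polynomial.eval_mul, Polynomial.eval_C]
  rw [this, intervalIntegral.integral_finset_sum]
  · refine Finset.sum_congr rfl fun i _ => ?_
    rw [intervalIntegral.integral_const_mul, ← aux_weight s c b hb i, mul_comm]
  · intro i _
    exact (continuous_const.mul (Lagrange.basis Finset.univ c i).continuous).intervalIntegrable 0 1

lemma aux_exact (s : ℕ) (hs : 0 < s) (P : ℕ → Polynomial ℝ)
    (hdeg : ∀ j, (P j).natDegree = j)
    (horth : ∀ i j, (∫ x in (0:ℝ)..1, (P i).eval x * (P j).eval x)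
      = if i = j then 1 else 0)
    (c : Fin s → ℝ) (hinj : Function.Injective c)
    (hzero : ∀ i, (P s).eval (c i) = 0)
    (b : Fin s → ℝ)
    (hb : ∀ j, b j = ∫ x in (0:ℝ)..1,
      ∏ k ∈ Finset.univ.erase j, ((x - c k) / (c j - c k))) :
    ∀ q : Polynomial ℝ, q.natDegree < 2 * s →
      (∫ x in (0:ℝ)..1, q.eval x) = ∑ i, b i * q.eval (c i) := by
  have hPs : P s ≠ 0 := by
    intro hm
    have := horth s s
    simp [hm] at this
  have hL : (P s).leadingCoeff ≠ 0 := Polynomial.leadingCoeff_ne_zero.mpr hPs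
  set M := P s * Polynomial.C (P s).leadingCoeff⁻¹ with hMdef
  have hM : M.Monic := Polynomial.monic_mul_leadingCoeff_inv hPs
  have hMdeg : M.natDegree = s := by
    rw [hMdef, Polynomial.natDegree_mul_C (inv_ne_zero hL), hdeg s]
  intro q hq
  set Q := q /ₘ M with hQdef
  set R := q %ₘ M with hRdef
  have hqMR : R + M * Q = q := Polynomial.modByMonic_add_div q M
  have hQdeg : Q.natDegree < s := by
    rw [hQdef, Polynomial.natDegree_divByMonic q hM, hMdeg]
    omega
  have hRdeg : R.degree < (s : ℕ) := by
    have := Polynomial.degree_modByMonic_lt q hM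
    rwa [Polynomial.degree_eq_natDegree hM.ne_zero, hMdeg] at this
  have hMev : ∀ x, M.eval x = (P s).eval x * (P s).leadingCoeff⁻¹ := by
    intro x; rw [hMdef, Polynomial.eval_mul, Polynomial.eval_C]
  have hMzero : ∀ i, M.eval (c i) = 0 := by
    intro i; rw [hMev, hzero i, zero_mul]
  have hint : ∀ p : Polynomial ℝ,
      IntervalIntegrable (fun x => p.eval x) MeasureTheory.volume 0 1 := fun p =>
    p.continuous.intervalIntegrable 0 1
  have key : (fun x => q.eval x)
      = fun x => R.eval x + (P s).leadingCoeff⁻¹ * ((P s).eval x * Q.eval x) := by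
    funext x
    conv_lhs => rw [← hqMR]
    rw [Polynomial.eval_add, Polynomial.eval_mul, hMev]
    ring
  rw [key, intervalIntegral.integral_add (hint R)
      (show IntervalIntegrable (fun x => (P s).leadingCoeff⁻¹ * ((P s).eval x * Q.eval x))
          MeasureTheory.volume 0 1 from
        ((((P s).continuous.mul Q.continuous).intervalIntegrable 0 1).const_mul _)),
    intervalIntegral.integral_const_mul,
    aux_orth s P hdeg horth Q.natDegree Q le_rfl hQdeg, mul_zero, add_zero,
    aux_exact_lt s c hinj b hb R hRdeg]
  refine Finset.sum_congr rfl fun i _ => ?_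
  have : q.eval (c i) = R.eval (c i) := by
    conv_lhs => rw [← hqMR]
    rw [Polynomial.eval_add, Polynomial.eval_mul, hMzero i, zero_mul, add_zero]
  rw [this]
/-- Gauss–Legendre quadrature error for the weighted integral: for `G` of class
`C^{2s}` and `j < s`,
`∫₀¹ P_j(c)G(ch)dc − Σ_i b_i P_j(c_i)G(c_ih) = O(h^{2s−j})` as `h → 0⁺`. -/
theorem stmt10 (s d : ℕ) (hs : 0 < s) (P : ℕ → Polynomial ℝ)
    (hdeg : ∀ j, (P j).natDegree = j)
    (horth : ∀ i j, (∫ x in (0:ℝ)..1, (P i).eval x * (P j).eval x)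
      = if i = j then 1 else 0)
    (c : Fin s → ℝ) (hmono : StrictMono c)
    (hmem : ∀ i, c i ∈ Set.Ioo (0:ℝ) 1)
    (hzero : ∀ i, (P s).eval (c i) = 0)
    (b : Fin s → ℝ)
    (hb : ∀ j, b j = ∫ x in (0:ℝ)..1,
      ∏ k ∈ Finset.univ.erase j, ((x - c k) / (c j - c k)))
    (G : ℝ → Fin d → ℝ) (hG : ContDiff ℝ (2 * s : ℕ) G)
    (j : ℕ) (hj : j < s) :
    ∃ C h₀ : ℝ, 0 < C ∧ 0 < h₀ ∧ ∀ h : ℝ, 0 < h → h ≤ h₀ →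
      ‖(∫ x in (0:ℝ)..1, ((P j).eval x) • G (x * h))
        - ∑ i, b i • (((P j).eval (c i)) • G (c i * h))‖ ≤ C * h ^ (2 * s - j) := by
  have hinj : Function.Injective c := hmono.injective
  set n := 2 * s - j - 1 with hndef
  have hn1 : n + 1 = 2 * s - j := by omega
  -- smoothness on [0,1]
  have hGs : ContDiffOn ℝ ((n + 1 : ℕ)) G (Set.Icc (0:ℝ) 1) := by
    refine (hG.of_le ?_).contDiffOn
    exact_mod_cast Nat.cast_le.mpr (by omega : n + 1 ≤ 2 * s)
  -- bound on the (n+1)-st iterated derivative on [0,1]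
  obtain ⟨C₁, hC₁⟩ := (isCompact_Icc (a := (0:ℝ)) (b := 1)).exists_bound_of_continuousOn
    (hGs.continuousOn_iteratedDerivWithin le_rfl (uniqueDiffOn_Icc one_pos))
  set C2 := max C₁ 0 with hC2def
  have hC2nn : (0:ℝ) ≤ C2 := le_max_right _ _
  have hC2 : ∀ x ∈ Set.Icc (0:ℝ) 1,
      ‖iteratedDerivWithin (n + 1) G (Set.Icc (0:ℝ) 1) x‖ ≤ C2 :=
    fun x hx => le_trans (hC₁ x hx) (le_max_left _ _)
  -- Taylor remainder bound
  set T : ℝ → Fin d → ℝ := fun t => taylorWithinEval G n (Set.Icc (0:ℝ) 1) 0 t with hTdef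
  have htaylor : ∀ t ∈ Set.Icc (0:ℝ) 1, ‖G t - T t‖ ≤ C2 * t ^ (n + 1) / (n.factorial) := by
    intro t ht
    have := taylor_mean_remainder_bound (a := 0) (b := 1) zero_le_one hGs ht hC2
    simpa using this
  -- bound on |P j| on [0,1]
  obtain ⟨Mp, hMp⟩ := (isCompact_Icc (a := (0:ℝ)) (b := 1)).exists_bound_of_continuousOn
    ((P j).continuous.continuousOn)
  set Mp2 := max Mp 0 with hMp2def
  have hMp2nn : (0:ℝ) ≤ Mp2 := le_max_right _ _
  have hMp2 : ∀ x ∈ Set.Icc (0:ℝ) 1, |(P j).eval x| ≤ Mp2 := by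
    intro x hx
    have := hMp x hx
    rw [Real.norm_eq_abs] at this
    exact le_trans this (le_max_left _ _)
  set B := ∑ i, |b i| * |(P j).eval (c i)| with hBdef
  have hBnn : (0:ℝ) ≤ B :=
    Finset.sum_nonneg fun i _ => mul_nonneg (abs_nonneg _) (abs_nonneg _)
  set K := (Mp2 + B) * C2 / (n.factorial) with hKdef
  have hKnn : (0:ℝ) ≤ K :=
    div_nonneg (mul_nonneg (add_nonneg hMp2nn hBnn) hC2nn) (Nat.cast_nonneg _)
  refine ⟨K + 1, 1, by positivity, one_pos, ?_⟩
  intro h hh0 hh1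
  -- Taylor polynomial as a sum
  set dk : ℕ → Fin d → ℝ := fun k => iteratedDerivWithin k G (Set.Icc (0:ℝ) 1) 0 with hdkdef
  have hT : ∀ t : ℝ, T t = ∑ k ∈ Finset.range (n + 1), (((k.factorial) : ℝ)⁻¹ * t ^ k) • dk k := by
    intro t
    have := taylor_within_apply G n (Set.Icc (0:ℝ) 1) 0 t
    simpa [hTdef, hdkdef] using this
  have hmem' : ∀ i : Fin s, c i * h ∈ Set.Icc (0:ℝ) 1 := fun i =>
    ⟨mul_nonneg (hmem i).1.le hh0.le, by nlinarith [(hmem i).1, (hmem i).2]⟩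
  -- continuity facts
  have hcG : Continuous fun x : ℝ => (P j).eval x • G (x * h) :=
    ((P j).continuous).smul (hG.continuous.comp (continuous_id.mul continuous_const))
  have hcT : Continuous fun x : ℝ => (P j).eval x • T (x * h) := by
    have he : (fun x : ℝ => (P j).eval x • T (x * h))
        = fun x => (P j).eval x • ∑ k ∈ Finset.range (n + 1),
            (((k.factorial) : ℝ)⁻¹ * (x * h) ^ k) • dk k := by
      funext x; rw [hT]
    rw [he]
    exact ((P j).continuous).smul (continuous_finset_sum _ fun k _ =>
      (continuous_const.mul ((continuous_id.mul continuous_const).pow k)).smul continuous_const)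
  -- quadrature exactness for P j * X^k
  have hexact : ∀ k ∈ Finset.range (n + 1),
      (∫ x in (0:ℝ)..1, (P j).eval x * x ^ k)
        = ∑ i, b i * ((P j).eval (c i) * (c i) ^ k) := by
    intro k hk
    have hdegk : (P j * Polynomial.X ^ k).natDegree < 2 * s := by
      have h1 : (P j * Polynomial.X ^ k).natDegree ≤ j + k :=
        le_trans (Polynomial.natDegree_mul_le)
          (by rw [hdeg j, Polynomial.natDegree_X_pow])
      have hk' : k ≤ n := Nat.lt_succ_iff.mp (Finset.mem_range.mp hk)
      omega
    have := aux_exact s hs P hdeg horth c hinj hzero b hb (P j * Polynomial.X ^ k) hdegk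
    simpa [Polynomial.eval_mul, Polynomial.eval_pow] using this
  -- exactness for the Taylor part
  have hI : (∫ x in (0:ℝ)..1, (P j).eval x • T (x * h))
      = ∑ i, b i • ((P j).eval (c i) • T (c i * h)) := by
    have lhs_eq : (fun x : ℝ => (P j).eval x • T (x * h))
        = fun x => ∑ k ∈ Finset.range (n + 1),
            ((((k.factorial) : ℝ)⁻¹ * h ^ k) * ((P j).eval x * x ^ k)) • dk k := by
      funext x
      rw [hT, Finset.smul_sum]
      refine Finset.sum_congr rfl fun k _ => ?_
      rw [smul_smul]
      congr 1
      ring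
    rw [lhs_eq, intervalIntegral.integral_finset_sum (fun k _ =>
      (show Continuous fun x : ℝ =>
          ((((k.factorial) : ℝ)⁻¹ * h ^ k) * ((P j).eval x * x ^ k)) • dk k from
        ((continuous_const.mul ((P j).continuous.mul (continuous_pow k))).smul
        continuous_const)).intervalIntegrable 0 1)]
    have rhs_eq : (∑ i, b i • ((P j).eval (c i) • T (c i * h)))
        = ∑ k ∈ Finset.range (n + 1),
            ((((k.factorial) : ℝ)⁻¹ * h ^ k) * (∑ i, b i * ((P j).eval (c i) * (c i) ^ k))) • dk k := by
      calc (∑ i, b i • ((P j).eval (c i) • T (c i * h)))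
          = ∑ i, ∑ k ∈ Finset.range (n + 1),
              ((((k.factorial) : ℝ)⁻¹ * h ^ k) * (b i * ((P j).eval (c i) * (c i) ^ k))) • dk k := by
            refine Finset.sum_congr rfl fun i _ => ?_
            rw [hT, Finset.smul_sum, Finset.smul_sum]
            refine Finset.sum_congr rfl fun k _ => ?_
            rw [smul_smul, smul_smul]
            congr 1
            ring
        _ = ∑ k ∈ Finset.range (n + 1), ∑ i,
              ((((k.factorial) : ℝ)⁻¹ * h ^ k) * (b i * ((P j).eval (c i) * (c i) ^ k))) • dk k :=
            Finset.sum_comm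
        _ = _ := by
            refine Finset.sum_congr rfl fun k _ => ?_
            rw [← Finset.sum_smul]
            congr 1
            rw [Finset.mul_sum]
    rw [rhs_eq]
    refine Finset.sum_congr rfl fun k hk => ?_
    simp_rw [intervalIntegral.integral_smul_const, intervalIntegral.integral_const_mul]
    rw [hexact k hk]
  -- split the error
  have hsumsub : (∑ i, b i • ((P j).eval (c i) • (G (c i * h) - T (c i * h))))
      = (∑ i, b i • ((P j).eval (c i) • G (c i * h)))
        - ∑ i, b i • ((P j).eval (c i) • T (c i * h)) := by
    rw [← Finset.sum_sub_distrib]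
    refine Finset.sum_congr rfl fun i _ => ?_
    rw [smul_sub, smul_sub]
  have hintsub : (∫ x in (0:ℝ)..1, (P j).eval x • (G (x * h) - T (x * h)))
      = (∫ x in (0:ℝ)..1, (P j).eval x • G (x * h))
        - ∫ x in (0:ℝ)..1, (P j).eval x • T (x * h) := by
    rw [← intervalIntegral.integral_sub (hcG.intervalIntegrable 0 1)
      (hcT.intervalIntegrable 0 1)]
    congr 1
    funext x
    rw [smul_sub]
  have hsplit : (∫ x in (0:ℝ)..1, (P j).eval x • G (x * h))
        - ∑ i, b i • ((P j).eval (c i) • G (c i * h))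
      = (∫ x in (0:ℝ)..1, (P j).eval x • (G (x * h) - T (x * h)))
        - ∑ i, b i • ((P j).eval (c i) • (G (c i * h) - T (c i * h))) := by
    rw [hintsub, hsumsub, hI]
    abel
  rw [hsplit, ← hn1]
  -- remainder bound at scaled points
  have hrem : ∀ t ∈ Set.Icc (0:ℝ) 1, t ≤ h → ‖G t - T t‖ ≤ C2 * h ^ (n + 1) / (n.factorial) := by
    intro t ht hth
    refine le_trans (htaylor t ht) ?_
    gcongr
    exact ht.1
  have hnorm1 : ‖∫ x in (0:ℝ)..1, (P j).eval x • (G (x * h) - T (x * h))‖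
      ≤ Mp2 * (C2 * h ^ (n + 1) / (n.factorial)) := by
    have hb1 : ∀ x ∈ Set.uIoc (0:ℝ) 1, ‖(P j).eval x • (G (x * h) - T (x * h))‖
        ≤ Mp2 * (C2 * h ^ (n + 1) / (n.factorial)) := by
      intro x hx
      have hx' : x ∈ Set.Icc (0:ℝ) 1 := by
        rw [Set.uIoc_of_le zero_le_one] at hx
        exact ⟨hx.1.le, hx.2⟩
      have hxh : x * h ∈ Set.Icc (0:ℝ) 1 :=
        ⟨mul_nonneg hx'.1 hh0.le,
          le_trans (mul_le_mul hx'.2 hh1 hh0.le zero_le_one) (by norm_num)⟩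
      have hxh2 : x * h ≤ h := mul_le_of_le_one_left hh0.le hx'.2
      rw [norm_smul, Real.norm_eq_abs]
      exact mul_le_mul (hMp2 x hx') (hrem _ hxh hxh2) (norm_nonneg _) hMp2nn
    have := intervalIntegral.norm_integral_le_of_norm_le_const hb1
    simpa using this
  have hnorm2 : ‖∑ i, b i • ((P j).eval (c i) • (G (c i * h) - T (c i * h)))‖
      ≤ B * (C2 * h ^ (n + 1) / (n.factorial)) := by
    refine le_trans (norm_sum_le _ _) ?_
    rw [hBdef, Finset.sum_mul]
    refine Finset.sum_le_sum fun i _ => ?_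
    rw [norm_smul, norm_smul, Real.norm_eq_abs, Real.norm_eq_abs, mul_assoc]
    refine mul_le_mul_of_nonneg_left ?_ (abs_nonneg _)
    refine mul_le_mul_of_nonneg_left ?_ (abs_nonneg _)
    exact hrem _ (hmem' i) (mul_le_of_le_one_left hh0.le (hmem i).2.le)
  calc ‖(∫ x in (0:ℝ)..1, (P j).eval x • (G (x * h) - T (x * h)))
        - ∑ i, b i • ((P j).eval (c i) • (G (c i * h) - T (c i * h)))‖
      ≤ ‖∫ x in (0:ℝ)..1, (P j).eval x • (G (x * h) - T (x * h))‖
        + ‖∑ i, b i • ((P j).eval (c i) • (G (c i * h) - T (c i * h)))‖ := norm_sub_le _ _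
    _ ≤ Mp2 * (C2 * h ^ (n + 1) / (n.factorial)) + B * (C2 * h ^ (n + 1) / (n.factorial)) :=
        add_le_add hnorm1 hnorm2
    _ = K * h ^ (n + 1) := by rw [hKdef]; ring
    _ ≤ (K + 1) * h ^ (n + 1) := by
        have hp : (0:ℝ) ≤ h ^ (n + 1) := by positivity
        nlinarith
end

section
/- With the matrices I_s, P_s, Ω defined from the s-point Gauss–Legendre nodes and shifted Legendre polynomials, the s×s matrix A := I_s P_sᵀ Ω has entries a_{ij} = b_j Σ_{ℓ=0}^{s-1} (∫₀^{c_i} P_ℓ(x)dx) P_ℓ(c_j), and A equals the Butcher matrix of the s-stage Gauss collocation Runge–Kutta method, i.e. a_{ij} = ∫₀^{c_i} ℓ_j(x) dx where ℓ_j is the Lagrange basis polynomial at the nodes c_1,...,c_s. -/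
open Polynomial Matrix Finset

lemma nodal_dvd_aux {F : Type*} [Field F] {ι : Type*} [DecidableEq ι] (v : ι → F)
    (s : Finset ι) :
    ∀ g : F[X], Set.InjOn v s → (∀ i ∈ s, g.eval (v i) = 0) → Lagrange.nodal s v ∣ g := by
  induction s using Finset.induction_on with
  | empty => intro g _ _; simpa [Lagrange.nodal_empty] using one_dvd g
  | @insert i s hi ih =>
    intro g hinj hg
    obtain ⟨h, rfl⟩ : (X - C (v i)) ∣ g :=
      dvd_iff_isRoot.mpr (hg i (mem_insert_self i s))
    have hinj' : Set.InjOn v s := hinj.mono (by simp [Finset.subset_insert])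
    have hh : ∀ k ∈ s, h.eval (v k) = 0 := by
      intro k hk
      have h0 := hg k (mem_insert_of_mem hk)
      have hne : v k - v i ≠ 0 := by
        refine sub_ne_zero.mpr fun e => hi ?_
        have : k = i := hinj (by simp [hk]) (by simp) e
        rwa [this] at hk
      simpa [eval_mul, mul_eq_zero, hne] using h0
    obtain ⟨r, rfl⟩ := ih h hinj' hh
    rw [Lagrange.nodal_insert_eq_nodal hi]
    exact ⟨r, by ring⟩

lemma expand_aux (P : ℕ → Polynomial ℝ) (hdeg : ∀ j, (P j).natDegree = j)
    (hne : ∀ j, P j ≠ 0) :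
    ∀ (n : ℕ) (f : ℝ[X]), f.degree < n →
      ∃ a : ℕ → ℝ, f = ∑ ℓ ∈ Finset.range n, C (a ℓ) * P ℓ := by
  intro n
  induction n with
  | zero =>
    intro f hf
    have h0 : f.degree < 0 := by exact_mod_cast hf
    have : f = 0 := degree_eq_bot.mp (Nat.WithBot.lt_zero_iff.mp h0)
    exact ⟨0, by simp [this]⟩
  | succ n ihn =>
    intro f hf
    by_cases h : f.degree < n
    · obtain ⟨a, ha⟩ := ihn f h
      set a' : ℕ → ℝ := fun ℓ => if ℓ = n then 0 else a ℓ with ha'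
      refine ⟨a', ?_⟩
      have h1 : a' n = 0 := if_pos rfl
      rw [Finset.sum_range_succ, h1, map_zero, zero_mul, add_zero, ha]
      refine Finset.sum_congr rfl fun ℓ hℓ => ?_
      have : a' ℓ = a ℓ := if_neg (Finset.mem_range.mp hℓ).ne
      rw [this]
    · push_neg at h
      have hfne : f ≠ 0 := by
        intro h0; rw [h0, degree_zero] at h; exact absurd h (by simp)
      have hnd : f.natDegree = n := by
        have h1 : f.natDegree < n + 1 := by
          have h2 := hf; rw [degree_eq_natDegree hfne] at h2; exact_mod_cast h2
        have h2 : n ≤ f.natDegree := by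
          rw [degree_eq_natDegree hfne] at h; exact_mod_cast h
        omega
      have hdegf : f.degree = (n : WithBot ℕ) := by rw [degree_eq_natDegree hfne, hnd]
      have hPn : (P n).degree = n := by
        rw [degree_eq_natDegree (hne n), hdeg n]
      have hlcP : (P n).leadingCoeff ≠ 0 := leadingCoeff_ne_zero.mpr (hne n)
      set k := f.leadingCoeff / (P n).leadingCoeff with hk
      have hkne : k ≠ 0 := div_ne_zero (leadingCoeff_ne_zero.mpr hfne) hlcP
      have hdegq : (C k * P n).degree = f.degree := by
        rw [degree_C_mul hkne, hPn, hdegf]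
      have hlcq : (C k * P n).leadingCoeff = f.leadingCoeff := by
        rw [leadingCoeff_mul, leadingCoeff_C, hk, div_mul_cancel₀ _ hlcP]
      have hsub : (f - C k * P n).degree < n := by
        have := degree_sub_lt hdegq.symm hfne hlcq.symm
        rwa [hdegf] at this
      obtain ⟨a, ha⟩ := ihn _ hsub
      set a' : ℕ → ℝ := fun ℓ => if ℓ = n then k else a ℓ with ha'
      refine ⟨a', ?_⟩
      have h1 : a' n = k := if_pos rfl
      rw [Finset.sum_range_succ, h1]
      have h3 : ∑ ℓ ∈ Finset.range n, C (a' ℓ) * P ℓ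
          = ∑ ℓ ∈ Finset.range n, C (a ℓ) * P ℓ :=
        Finset.sum_congr rfl fun ℓ hℓ => by
          have : a' ℓ = a ℓ := if_neg (Finset.mem_range.mp hℓ).ne
          rw [this]
      rw [h3, ← ha]; ring

/-- The matrix `A := I_s P_sᵀ Ω` has entries
`a_{ij} = b_j Σ_{ℓ<s} (∫₀^{c_i} P_ℓ) P_ℓ(c_j)` and coincides with the Butcher matrix
of the `s`-stage Gauss method: `a_{ij} = ∫₀^{c_i} ℓ_j(x)dx`. -/
theorem stmt11 (s : ℕ) (hs : 0 < s) (P : ℕ → Polynomial ℝ)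
    (hdeg : ∀ j, (P j).natDegree = j)
    (horth : ∀ i j, (∫ x in (0:ℝ)..1, (P i).eval x * (P j).eval x)
      = if i = j then 1 else 0)
    (c : Fin s → ℝ) (hmono : StrictMono c)
    (hmem : ∀ i, c i ∈ Set.Ioo (0:ℝ) 1)
    (hzero : ∀ i, (P s).eval (c i) = 0)
    (b : Fin s → ℝ)
    (hb : ∀ j, b j = ∫ x in (0:ℝ)..1,
      ∏ k ∈ Finset.univ.erase j, ((x - c k) / (c j - c k)))
    (Imat Pmat Ω : Matrix (Fin s) (Fin s) ℝ)
    (hI : ∀ i j : Fin s, Imat i j = ∫ x in (0:ℝ)..(c i), (P (j : ℕ)).eval x)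
    (hP : ∀ i j : Fin s, Pmat i j = (P (j : ℕ)).eval (c i))
    (hΩ : Ω = Matrix.diagonal b) :
    ∀ i j : Fin s,
      (Imat * Pmat.transpose * Ω) i j
        = b j * ∑ l ∈ Finset.range s,
            (∫ x in (0:ℝ)..(c i), (P l).eval x) * (P l).eval (c j) ∧
      (Imat * Pmat.transpose * Ω) i j
        = ∫ x in (0:ℝ)..(c i),
            ∏ k ∈ Finset.univ.erase j, ((x - c k) / (c j - c k)) := by
  intro i j
  classical
  -- basic facts
  have hinj : Set.InjOn c ↑(Finset.univ : Finset (Fin s)) := hmono.injective.injOn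
  have hPne : ∀ n, P n ≠ 0 := by
    intro n h
    have h1 := horth n n
    rw [if_pos rfl] at h1
    simp [h] at h1
  -- Lagrange basis polynomials
  set L : Fin s → ℝ[X] := fun j => Lagrange.basis Finset.univ c j with hL
  have hLeval : ∀ (j : Fin s) (x : ℝ),
      (L j).eval x = ∏ k ∈ Finset.univ.erase j, ((x - c k) / (c j - c k)) := by
    intro j x
    rw [hL]
    simp only [Lagrange.basis, eval_prod, Lagrange.basisDivisor, eval_mul, eval_C, eval_sub,
      eval_X]
    exact Finset.prod_congr rfl fun k _ => by rw [div_eq_mul_inv, mul_comm]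
  -- coefficient extraction by orthonormality
  have hcoeff : ∀ (f : ℝ[X]) (a : ℕ → ℝ),
      f = ∑ ℓ ∈ Finset.range s, C (a ℓ) * P ℓ → ∀ m, m < s →
      (∫ x in (0:ℝ)..1, f.eval x * (P m).eval x) = a m := by
    intro f a hf m hm
    rw [hf]
    have h1 : ∀ x : ℝ, (∑ ℓ ∈ Finset.range s, C (a ℓ) * P ℓ).eval x * (P m).eval x
        = ∑ ℓ ∈ Finset.range s, a ℓ * ((P ℓ).eval x * (P m).eval x) := by
      intro x
      rw [eval_finset_sum, Finset.sum_mul]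
      exact Finset.sum_congr rfl fun ℓ _ => by rw [eval_mul, eval_C]; ring
    rw [intervalIntegral.integral_congr (g := fun x => ∑ ℓ ∈ Finset.range s,
      a ℓ * ((P ℓ).eval x * (P m).eval x)) (fun x _ => h1 x)]
    rw [intervalIntegral.integral_finset_sum (f := fun ℓ x => a ℓ * ((P ℓ).eval x * (P m).eval x)) (fun ℓ _ =>
      ((continuous_const.mul (((P ℓ).continuous).mul ((P m).continuous))).intervalIntegrable 0 1))]
    have h2 : ∀ ℓ ∈ Finset.range s,
        (∫ x in (0:ℝ)..1, a ℓ * ((P ℓ).eval x * (P m).eval x))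
          = a ℓ * (if ℓ = m then (1:ℝ) else 0) := by
      intro ℓ _
      rw [intervalIntegral.integral_const_mul, horth]
    rw [Finset.sum_congr rfl h2]
    simp [Finset.sum_ite_eq, Finset.mem_range, hm]
  -- orthogonality of P s with polynomials of degree < s
  have horths : ∀ f : ℝ[X], f.degree < s →
      (∫ x in (0:ℝ)..1, (P s).eval x * f.eval x) = 0 := by
    intro f hf
    obtain ⟨a, ha⟩ := expand_aux P hdeg hPne s f hf
    rw [ha]
    have h1 : ∀ x : ℝ, (P s).eval x * (∑ ℓ ∈ Finset.range s, C (a ℓ) * P ℓ).eval x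
        = ∑ ℓ ∈ Finset.range s, a ℓ * ((P s).eval x * (P ℓ).eval x) := by
      intro x
      rw [eval_finset_sum, Finset.mul_sum]
      exact Finset.sum_congr rfl fun ℓ _ => by rw [eval_mul, eval_C]; ring
    rw [intervalIntegral.integral_congr (g := fun x => ∑ ℓ ∈ Finset.range s,
      a ℓ * ((P s).eval x * (P ℓ).eval x)) (fun x _ => h1 x)]
    rw [intervalIntegral.integral_finset_sum (f := fun ℓ x => a ℓ * ((P s).eval x * (P ℓ).eval x)) (fun ℓ _ =>
      ((continuous_const.mul (((P s).continuous).mul ((P ℓ).continuous))).intervalIntegrable 0 1))]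
    refine Finset.sum_eq_zero fun ℓ hℓ => ?_
    rw [intervalIntegral.integral_const_mul, horth, if_neg (Finset.mem_range.mp hℓ).ne', mul_zero]
  -- P s is a scalar multiple of the nodal polynomial
  obtain ⟨q, hq⟩ : Lagrange.nodal Finset.univ c ∣ P s :=
    nodal_dvd_aux c Finset.univ (P s) hinj (fun i _ => hzero i)
  have hqne : q ≠ 0 := by
    intro h; rw [h, mul_zero] at hq; exact hPne s hq
  have hqdeg : q.natDegree = 0 := by
    have h1 := hdeg s
    rw [hq, natDegree_mul (Lagrange.nodal_ne_zero) hqne, Lagrange.natDegree_nodal,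
      Finset.card_univ, Fintype.card_fin] at h1
    omega
  set d : ℝ := q.coeff 0 with hd
  have hqC : q = C d := eq_C_of_natDegree_eq_zero hqdeg
  have hdne : d ≠ 0 := by
    intro h; rw [hqC, h, map_zero] at hqne; exact hqne rfl
  have hnodal_eval : ∀ x : ℝ, (Lagrange.nodal Finset.univ c).eval x = d⁻¹ * (P s).eval x := by
    intro x
    rw [hq, hqC, eval_mul, eval_C]
    field_simp
  -- quadrature exactness
  have hquad : ∀ (j : Fin s) (m : ℕ), m < s →
      (∫ x in (0:ℝ)..1, (L j).eval x * (P m).eval x) = b j * (P m).eval (c j) := by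
    intro j m hm
    set g : ℝ[X] := L j * P m - C ((P m).eval (c j)) * L j with hg
    have hroot : ∀ k : Fin s, g.eval (c k) = 0 := by
      intro k
      rw [hg]
      by_cases hkj : k = j
      · subst hkj
        simp [eval_mul, Lagrange.eval_basis_self hinj (Finset.mem_univ k), hL]
      · simp [eval_mul, Lagrange.eval_basis_of_ne (Ne.symm hkj) (Finset.mem_univ k), hL]
    obtain ⟨r, hr⟩ := nodal_dvd_aux c Finset.univ g hinj (fun k _ => hroot k)
    -- integral of g over [0,1] is zero
    have hgint : (∫ x in (0:ℝ)..1, g.eval x) = 0 := by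
      by_cases hg0 : g = 0
      · simp [hg0]
      · have hrne : r ≠ 0 := by
          intro h; rw [h, mul_zero] at hr; exact hg0 hr
        have hLdeg : (L j).natDegree = s - 1 := by
          rw [hL]
          rw [Lagrange.natDegree_basis hinj (Finset.mem_univ j), Finset.card_univ,
            Fintype.card_fin]
        have hgdeg : g.natDegree ≤ s - 1 + m := by
          refine le_trans (natDegree_sub_le _ _) (max_le ?_ ?_)
          · exact le_trans (natDegree_mul_le) (by rw [hLdeg, hdeg])
          · refine le_trans (natDegree_mul_le) ?_
            rw [natDegree_C, hLdeg]
            omega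
        have hrdeg : r.natDegree < s := by
          have h1 : g.natDegree = s + r.natDegree := by
            rw [hr, natDegree_mul (Lagrange.nodal_ne_zero) hrne, Lagrange.natDegree_nodal,
              Finset.card_univ, Fintype.card_fin]
          omega
        have hrdeg' : r.degree < (s : WithBot ℕ) := by
          refine lt_of_le_of_lt (degree_le_natDegree) ?_
          exact_mod_cast hrdeg
        have h2 : ∀ x : ℝ, g.eval x = d⁻¹ * ((P s).eval x * r.eval x) := by
          intro x
          rw [hr, eval_mul, hnodal_eval]
          ring
        rw [intervalIntegral.integral_congr (g := fun x => d⁻¹ * ((P s).eval x * r.eval x))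
          (fun x _ => h2 x), intervalIntegral.integral_const_mul, horths r hrdeg', mul_zero]
    -- unfold g
    have hint1 : IntervalIntegrable (fun x => (L j).eval x * (P m).eval x) MeasureTheory.volume 0 1 :=
      (((L j).continuous).mul ((P m).continuous)).intervalIntegrable 0 1
    have hint2 : IntervalIntegrable (fun x => (P m).eval (c j) * (L j).eval x) MeasureTheory.volume 0 1 :=
      (continuous_const.mul ((L j).continuous)).intervalIntegrable 0 1
    have h3 : ∀ x : ℝ, g.eval x = (L j).eval x * (P m).eval x
        - (P m).eval (c j) * (L j).eval x := by
      intro x; rw [hg]; simp [eval_mul]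
    rw [intervalIntegral.integral_congr (g := fun x => (L j).eval x * (P m).eval x
      - (P m).eval (c j) * (L j).eval x) (fun x _ => h3 x),
      intervalIntegral.integral_sub hint1 hint2, sub_eq_zero] at hgint
    rw [hgint, intervalIntegral.integral_const_mul]
    have hbj : (∫ x in (0:ℝ)..1, (L j).eval x) = b j := by
      rw [hb j]
      exact intervalIntegral.integral_congr (fun x _ => hLeval j x)
    rw [hbj]; ring
  -- expansion of L j
  have hLne : L j ≠ 0 := Lagrange.basis_ne_zero hinj (Finset.mem_univ j)
  have hLdeg : (L j).degree < (s : WithBot ℕ) := by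
    rw [degree_eq_natDegree hLne, hL, Lagrange.natDegree_basis hinj (Finset.mem_univ j),
      Finset.card_univ, Fintype.card_fin]
    exact_mod_cast Nat.sub_lt hs one_pos
  obtain ⟨a, ha⟩ := expand_aux P hdeg hPne s (L j) hLdeg
  have ham : ∀ m, m < s → a m = b j * (P m).eval (c j) := fun m hm =>
    (hcoeff (L j) a ha m hm).symm.trans (hquad j m hm)
  -- the integral of L j from 0 to c i
  have hIL : (∫ x in (0:ℝ)..(c i), (L j).eval x)
      = ∑ ℓ ∈ Finset.range s, a ℓ * ∫ x in (0:ℝ)..(c i), (P ℓ).eval x := by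
    have h1 : ∀ x : ℝ, (L j).eval x = ∑ ℓ ∈ Finset.range s, a ℓ * (P ℓ).eval x := by
      intro x
      rw [ha, eval_finset_sum]
      exact Finset.sum_congr rfl fun ℓ _ => by rw [eval_mul, eval_C]
    rw [intervalIntegral.integral_congr (g := fun x => ∑ ℓ ∈ Finset.range s,
      a ℓ * (P ℓ).eval x) (fun x _ => h1 x)]
    rw [intervalIntegral.integral_finset_sum (f := fun ℓ x => a ℓ * (P ℓ).eval x) (fun ℓ _ =>
      (continuous_const.mul ((P ℓ).continuous)).intervalIntegrable 0 (c i))]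
    exact Finset.sum_congr rfl fun ℓ _ => by rw [intervalIntegral.integral_const_mul]
  -- matrix entry
  have hmat : (Imat * Pmat.transpose * Ω) i j
      = b j * ∑ l ∈ Finset.range s,
          (∫ x in (0:ℝ)..(c i), (P l).eval x) * (P l).eval (c j) := by
    rw [hΩ, Matrix.mul_diagonal, Matrix.mul_apply]
    rw [mul_comm]
    congr 1
    rw [← Fin.sum_univ_eq_sum_range (fun l =>
      (∫ x in (0:ℝ)..(c i), (P l).eval x) * (P l).eval (c j)) s]
    exact Finset.sum_congr rfl fun l _ => by
      rw [hI, Matrix.transpose_apply, hP]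
  refine ⟨hmat, ?_⟩
  rw [hmat]
  rw [← intervalIntegral.integral_congr (fun x _ => hLeval j x), hIL, Finset.mul_sum]
  exact Finset.sum_congr rfl fun ℓ hℓ => by
    rw [ham ℓ (Finset.mem_range.mp hℓ)]; ring
end

section
/- The matrix X_s ∈ ℝ^{s×s} with (X_s)_{1,1} = ξ₀ = 1/2, subdiagonal entries (X_s)_{j+1,j} = ξ_j, superdiagonal entries (X_s)_{j,j+1} = −ξ_j for 1 ≤ j ≤ s−1 (where ξ_i = 1/(2√(4i²−1))), and all other entries zero, is nonsingular. -/
open Matrix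

/-- `ξ_i = 1/(2√(4i²−1))` (with `|·|` to cover `i = 0`). -/
noncomputable def xi (i : ℕ) : ℝ := 1 / (2 * Real.sqrt |4 * (i : ℝ) ^ 2 - 1|)


lemma abs_pos' (i : ℕ) : (0:ℝ) < |4 * (i : ℝ) ^ 2 - 1| := by
  rw [abs_pos]
  rcases i with _ | n
  · norm_num
  · have h1 : (1:ℝ) ≤ ((n+1 : ℕ) : ℝ) := by exact_mod_cast Nat.one_le_iff_ne_zero.mpr (Nat.succ_ne_zero n)
    nlinarith

lemma xi_pos (i : ℕ) : 0 < xi i := by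
  have := Real.sqrt_pos.mpr (abs_pos' i)
  unfold xi
  positivity

lemma xi_zero : xi 0 = 1 / 2 := by
  unfold xi
  norm_num

/-- The tridiagonal matrix `X_s` with `(X_s)_{11} = ξ₀ = 1/2`, subdiagonal entries
`(X_s)_{j+1,j} = ξ_j`, superdiagonal entries `(X_s)_{j,j+1} = −ξ_j`, and zeros
elsewhere, is nonsingular. -/
theorem stmt12 (s : ℕ) (hs : 0 < s) (X : Matrix (Fin s) (Fin s) ℝ)
    (hX : ∀ i j : Fin s, X i j =
      if (i : ℕ) = 0 ∧ (j : ℕ) = 0 then xi 0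
      else if (i : ℕ) = (j : ℕ) + 1 then xi (i : ℕ)
      else if (j : ℕ) = (i : ℕ) + 1 then -(xi (j : ℕ))
      else 0) :
    X.det ≠ 0 := by
  intro hdet
  obtain ⟨v, hv0, hv⟩ := (Matrix.exists_mulVec_eq_zero_iff).mpr hdet
  set z : Fin s := ⟨0, hs⟩ with hzdef
  have key : ∀ i j : Fin s, X i j + X j i = if (i : ℕ) = 0 ∧ (j : ℕ) = 0 then 1 else 0 := by
    intro i j
    rw [hX i j, hX j i]
    split_ifs <;> first | omega | (simp_all [xi_zero]; ring) | ring | (exfalso; omega)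
  -- quadratic form vanishes
  have hq1 : v ⬝ᵥ (X *ᵥ v) = 0 := by rw [hv]; simp
  have hq2 : v ⬝ᵥ (Xᵀ *ᵥ v) = 0 := by
    rw [Matrix.mulVec_transpose, dotProduct_comm, ← Matrix.dotProduct_mulVec, hv]; simp
  have hquad : ∑ i, ∑ j, v i * ((X i j + X j i) * v j) = 0 := by
    have : v ⬝ᵥ (X *ᵥ v) + v ⬝ᵥ (Xᵀ *ᵥ v) = ∑ i, ∑ j, v i * ((X i j + X j i) * v j) := by
      simp [dotProduct, Matrix.mulVec, Finset.mul_sum, ← Finset.sum_add_distrib]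
      congr 1; ext i; congr 1; ext j; ring
    rw [hq1, hq2] at this
    linarith [this]
  have hz : v z = 0 := by
    have h2 : ∑ i, ∑ j, v i * ((X i j + X j i) * v j) = v z * v z := by
      calc ∑ i, ∑ j, v i * ((X i j + X j i) * v j)
          = ∑ i : Fin s, ∑ j : Fin s, v i * ((if i.val = 0 ∧ j.val = 0 then (1:ℝ) else 0) * v j) := by
            simp_rw [key]
        _ = v z * v z := by
            rw [Finset.sum_eq_single z]
            · rw [Finset.sum_eq_single z]
              · simp [hzdef]
              · intro b _ hb
                have : ¬((b:ℕ) = 0) := by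
                  intro h; exact hb (Fin.ext h)
                simp [this]
              · intro h; exact absurd (Finset.mem_univ _) h
            · intro b _ hb
              have : ¬((b:ℕ) = 0) := by intro h; exact hb (Fin.ext h)
              simp [this]
            · intro h; exact absurd (Finset.mem_univ _) h
    rw [h2] at hquad
    exact mul_self_eq_zero.mp hquad
  have hall : ∀ n, ∀ hn : n < s, v ⟨n, hn⟩ = 0 := by
    intro n
    induction n using Nat.strong_induction_on with
    | _ n IH =>
      rcases n with _ | m
      · intro hn; exact hz
      · intro hn
        have hm : m < s := by omega
        have hrow : ∑ j, X ⟨m, hm⟩ j * v j = 0 := by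
          have := congrFun hv ⟨m, hm⟩
          simpa [Matrix.mulVec, dotProduct] using this
        have hsum : ∑ j, X ⟨m, hm⟩ j * v j = X ⟨m, hm⟩ ⟨m+1, hn⟩ * v ⟨m+1, hn⟩ := by
          apply Finset.sum_eq_single
          · intro b _ hb
            by_cases hble : (b : ℕ) ≤ m
            · have hvb : v b = 0 := by
                have := IH (b : ℕ) (by omega) b.isLt
                simpa using this
              rw [hvb, mul_zero]
            · have hbne : (b : ℕ) ≠ m + 1 := fun h => hb (Fin.ext h)
              have hbv : m + 2 ≤ (b : ℕ) := by omega
              rw [hX]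
              simp only [Fin.val_mk]
              split_ifs <;> first | omega | ring | tauto
          · intro h; exact absurd (Finset.mem_univ _) h
        have hXval : X ⟨m, hm⟩ ⟨m+1, hn⟩ = -(xi (m+1)) := by
          rw [hX]
          simp only [Fin.val_mk]
          split_ifs <;> first | omega | rfl | tauto
        rw [hsum, hXval] at hrow
        have hne : -(xi (m+1)) ≠ 0 := neg_ne_zero.mpr (ne_of_gt (xi_pos (m+1)))
        exact (mul_eq_zero.mp hrow).resolve_left hne
  apply hv0
  funext i
  have := hall (i : ℕ) i.isLt
  simpa using this
end

section
/- For the s-stage Gauss collocation method, the Butcher matrix A = I_s P_sᵀ Ω satisfies ΩA + AᵀΩ = bbᵀ, where b = (b_1,...,b_s)ᵀ is the vector of Gauss–Legendre weights and Ω = diag(b). In particular the symmetric part of ΩA is positive semidefinite, and xᵀΩAx = ½(bᵀx)² ≥ 0 for all x ∈ ℝ^s. -/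
open Polynomial Matrix Finset

noncomputable def antid (p : Polynomial ℝ) : Polynomial ℝ :=
  ∑ n ∈ Finset.range (p.natDegree + 1), C (p.coeff n / (n + 1)) * X ^ (n + 1)

lemma antid_deriv (p : Polynomial ℝ) : (antid p).derivative = p := by
  rw [antid, derivative_sum]
  conv_rhs => rw [p.as_sum_range' (p.natDegree + 1) (Nat.lt_succ_self _)]
  refine Finset.sum_congr rfl fun n _ => ?_
  rw [derivative_C_mul, derivative_X_pow, ← C_mul_X_pow_eq_monomial]
  push_cast
  rw [← mul_assoc, ← C_mul]
  congr 2
  have h : ((n:ℝ) + 1) ≠ 0 := by positivity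
  field_simp

lemma antid_eval_zero (p : Polynomial ℝ) : (antid p).eval 0 = 0 := by
  simp [antid, eval_finset_sum]

lemma antid_natDegree_le (p : Polynomial ℝ) : (antid p).natDegree ≤ p.natDegree + 1 := by
  refine (Polynomial.natDegree_sum_le _ _).trans ?_
  simp only [Finset.fold_max_le]
  constructor
  · exact Nat.zero_le _
  · intro n hn
    refine (natDegree_C_mul_le _ _).trans ?_
    simp only [natDegree_X_pow]
    exact Nat.succ_le_succ (Nat.lt_succ_iff.mp (Finset.mem_range.mp hn))

lemma integral_deriv_poly (F : Polynomial ℝ) (a t : ℝ) :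
    (∫ x in a..t, (F.derivative).eval x) = F.eval t - F.eval a :=
  intervalIntegral.integral_eq_sub_of_hasDerivAt (f := fun y => F.eval y)
    (fun x _ => F.hasDerivAt x) (F.derivative.continuous.intervalIntegrable a t)

lemma integral_eval (p : Polynomial ℝ) (a t : ℝ) :
    (∫ x in a..t, p.eval x) = (antid p).eval t - (antid p).eval a := by
  rw [← integral_deriv_poly (antid p) a t]
  refine intervalIntegral.integral_congr fun x _ => ?_
  rw [antid_deriv]

lemma orth_ext (s : ℕ) (hs : 0 < s) (P : ℕ → Polynomial ℝ)
    (hdeg : ∀ j, (P j).natDegree = j)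
    (horth : ∀ i j, (∫ x in (0:ℝ)..1, (P i).eval x * (P j).eval x)
      = if i = j then 1 else 0) :
    ∀ (n : ℕ) (q : Polynomial ℝ), q.natDegree ≤ n → q.natDegree < s →
      (∫ x in (0:ℝ)..1, (P s).eval x * q.eval x) = 0 := by
  have hP0 : ∀ j, (P j) ≠ 0 := by
    intro j hj
    have := horth j j
    rw [hj] at this
    simp at this
  have hlc : ∀ j, (P j).coeff j ≠ 0 := by
    intro j h
    refine hP0 j (leadingCoeff_eq_zero.mp ?_)
    rw [leadingCoeff, hdeg]
    exact h
  have key : ∀ (d : ℕ) (β : ℝ), d ≠ s →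
      (∫ x in (0:ℝ)..1, (P s).eval x * (β * (P d).eval x)) = 0 := by
    intro d β hds
    have : (∫ x in (0:ℝ)..1, (P s).eval x * (β * (P d).eval x))
        = β * ∫ x in (0:ℝ)..1, (P s).eval x * (P d).eval x := by
      rw [← intervalIntegral.integral_const_mul]
      refine intervalIntegral.integral_congr fun x _ => by ring
    rw [this, horth s d, if_neg (Ne.symm hds), mul_zero]
  intro n
  induction n with
  | zero =>
    intro q hq _
    have hq0 : q = C (q.coeff 0) := (Polynomial.eq_C_of_natDegree_le_zero hq)
    have hP00 : P 0 = C ((P 0).coeff 0) :=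
      Polynomial.eq_C_of_natDegree_le_zero (le_of_eq (hdeg 0))
    have : ∀ x : ℝ, q.eval x = (q.coeff 0 / (P 0).coeff 0) * (P 0).eval x := by
      intro x
      have h1 : q.eval x = q.coeff 0 := by conv_lhs => rw [hq0, eval_C]
      have h2 : (P 0).eval x = (P 0).coeff 0 := by conv_lhs => rw [hP00, eval_C]
      rw [h1, h2, div_mul_eq_mul_div, mul_div_cancel_right₀ _ (hlc 0)]
    calc (∫ x in (0:ℝ)..1, (P s).eval x * q.eval x)
        = ∫ x in (0:ℝ)..1, (P s).eval x * ((q.coeff 0 / (P 0).coeff 0) * (P 0).eval x) := by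
          refine intervalIntegral.integral_congr fun x _ => by rw [this x]
      _ = 0 := key 0 _ hs.ne
  | succ n IH =>
    intro q hq hqs
    by_cases h0 : q.natDegree ≤ n
    · exact IH q h0 hqs
    have hd : q.natDegree = n + 1 := le_antisymm hq (not_le.mp h0)
    set d := q.natDegree with hdd
    set α : ℝ := q.coeff d / (P d).coeff d with hα
    set q' : Polynomial ℝ := q - C α * P d with hq'
    have hcoeff : q'.coeff d = 0 := by
      rw [hq']
      simp only [coeff_sub, coeff_C_mul]
      rw [hα, div_mul_cancel₀ _ (hlc d), sub_self]
    have hdegq' : q'.natDegree ≤ n := by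
      rcases eq_or_ne q' 0 with h | h
      · simp [h]
      have hle : q'.natDegree ≤ d := by
        refine (Polynomial.natDegree_sub_le _ _).trans ?_
        simp only [max_le_iff, le_refl, true_and]
        exact ⟨le_rfl, (natDegree_C_mul_le _ _).trans (le_of_eq (hdeg d)) |>.trans (le_refl d)⟩
      have hne : q'.natDegree ≠ d := by
        intro hh
        exact h (leadingCoeff_eq_zero.mp (by rw [leadingCoeff, hh]; exact hcoeff))
      omega
    have hqdec : q = C α * P d + q' := by rw [hq']; ring
    have hsplit : (∫ x in (0:ℝ)..1, (P s).eval x * q.eval x)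
        = (∫ x in (0:ℝ)..1, (P s).eval x * (α * (P d).eval x))
          + ∫ x in (0:ℝ)..1, (P s).eval x * q'.eval x := by
      rw [← intervalIntegral.integral_add (f := fun x => (P s).eval x * (α * (P d).eval x))
        (g := fun x => (P s).eval x * q'.eval x)
        (((P s).continuous.mul (continuous_const.mul (P d).continuous)).intervalIntegrable 0 1)
        (((P s).continuous.mul q'.continuous).intervalIntegrable 0 1)]
      refine intervalIntegral.integral_congr fun x _ => ?_
      rw [hqdec]
      simp only [eval_add, eval_mul, eval_C]
      ring
    rw [hsplit, key d α (by omega), IH q' hdegq' (by omega), add_zero]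

/-- Symplecticity/algebraic stability identity for the `s`-stage Gauss method:
`ΩA + AᵀΩ = bbᵀ`, and consequently `xᵀΩAx = ½(bᵀx)² ≥ 0` for all `x`. -/
theorem stmt14 (s : ℕ) (hs : 0 < s) (P : ℕ → Polynomial ℝ)
    (hdeg : ∀ j, (P j).natDegree = j)
    (horth : ∀ i j, (∫ x in (0:ℝ)..1, (P i).eval x * (P j).eval x)
      = if i = j then 1 else 0)
    (c : Fin s → ℝ) (hmono : StrictMono c)
    (hmem : ∀ i, c i ∈ Set.Ioo (0:ℝ) 1)
    (hzero : ∀ i, (P s).eval (c i) = 0)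
    (b : Fin s → ℝ)
    (hb : ∀ j, b j = ∫ x in (0:ℝ)..1,
      ∏ k ∈ Finset.univ.erase j, ((x - c k) / (c j - c k)))
    (A Ω : Matrix (Fin s) (Fin s) ℝ)
    (hA : ∀ i j : Fin s, A i j = ∫ x in (0:ℝ)..(c i),
      ∏ k ∈ Finset.univ.erase j, ((x - c k) / (c j - c k)))
    (hΩ : Ω = Matrix.diagonal b) :
    Ω * A + A.transpose * Ω = Matrix.vecMulVec b b ∧
    ∀ x : Fin s → ℝ,
      x ⬝ᵥ (Ω * A).mulVec x = (b ⬝ᵥ x) ^ 2 / 2 ∧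
      0 ≤ x ⬝ᵥ (Ω * A).mulVec x := by
  classical
  have hcinj : Set.InjOn c ↑(univ : Finset (Fin s)) :=
    fun a _ b _ h => hmono.injective h
  have hcard : #(univ : Finset (Fin s)) = s := by simp
  set ℓ : Fin s → Polynomial ℝ := fun j => Lagrange.basis univ c j with hℓ
  have heval : ∀ (j : Fin s) (x : ℝ),
      (ℓ j).eval x = ∏ k ∈ Finset.univ.erase j, ((x - c k) / (c j - c k)) := by
    intro j x
    rw [hℓ]
    simp only [Lagrange.basis, eval_prod]
    refine Finset.prod_congr rfl fun k _ => ?_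
    rw [Lagrange.basisDivisor, eval_mul, eval_C, eval_sub, eval_X, eval_C,
      div_eq_mul_inv, mul_comm]
  have hbj : ∀ j, b j = (antid (ℓ j)).eval 1 := by
    intro j
    rw [hb j, show (∫ x in (0:ℝ)..1, ∏ k ∈ Finset.univ.erase j, ((x - c k) / (c j - c k)))
        = ∫ x in (0:ℝ)..1, (ℓ j).eval x from
      intervalIntegral.integral_congr fun x _ => (heval j x).symm,
      integral_eval, antid_eval_zero, sub_zero]
  have hAij : ∀ i j, A i j = (antid (ℓ j)).eval (c i) := by
    intro i j
    rw [hA i j, show (∫ x in (0:ℝ)..(c i), ∏ k ∈ Finset.univ.erase j, ((x - c k) / (c j - c k)))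
        = ∫ x in (0:ℝ)..(c i), (ℓ j).eval x from
      intervalIntegral.integral_congr fun x _ => (heval j x).symm,
      integral_eval, antid_eval_zero, sub_zero]
  have hdegℓ : ∀ j, (ℓ j).natDegree = s - 1 := by
    intro j
    rw [hℓ]
    rw [Lagrange.natDegree_basis hcinj (mem_univ j), hcard]
  have hP0s : P s ≠ 0 := by
    intro h
    have := hdeg s
    rw [h] at this
    simp at this
    omega
  -- Gauss quadrature exactness for degree < 2s
  have hquad : ∀ p : Polynomial ℝ, p.natDegree < 2 * s →
      (∫ x in (0:ℝ)..1, p.eval x) = ∑ k, b k * p.eval (c k) := by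
    intro p hp
    have hlc : (P s).leadingCoeff ≠ 0 := leadingCoeff_ne_zero.mpr hP0s
    set M := P s * C ((P s).leadingCoeff)⁻¹ with hM
    have hMmon : M.Monic := monic_mul_leadingCoeff_inv hP0s
    have hMdeg : M.natDegree = s := by
      rw [hM, natDegree_mul hP0s (fun h => (inv_ne_zero hlc) (C_eq_zero.mp h)),
        natDegree_C, hdeg, add_zero]
    set r := p %ₘ M with hr
    set q := p /ₘ M with hqdef
    have hdecomp : p = M * q + r := by
      rw [hr, hqdef, add_comm]
      exact (modByMonic_add_div p M).symm
    have hrd : r.degree < M.degree := degree_modByMonic_lt p hMmon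
    rw [degree_eq_natDegree (hMmon.ne_zero), hMdeg] at hrd
    have hrdeg : r.degree < (#(univ : Finset (Fin s)) : ℕ) := by rwa [hcard]
    have hqdeg : q.natDegree < s := by
      have h1 : q.natDegree = p.natDegree - M.natDegree := natDegree_divByMonic p hMmon
      rw [hMdeg] at h1
      omega
    have hMzero : ∀ k, M.eval (c k) = 0 := by
      intro k
      rw [hM, eval_mul, hzero k, zero_mul]
    -- integral of M*q part vanishes
    have hMq : (∫ x in (0:ℝ)..1, (M * q).eval x) = 0 := by
      have h1 : ∀ x : ℝ, (M * q).eval x = (P s).eval x * ((C ((P s).leadingCoeff)⁻¹ * q).eval x) := by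
        intro x
        rw [hM]
        simp only [eval_mul, eval_C]
        ring
      rw [show (∫ x in (0:ℝ)..1, (M * q).eval x)
          = ∫ x in (0:ℝ)..1, (P s).eval x * ((C ((P s).leadingCoeff)⁻¹ * q).eval x) from
        intervalIntegral.integral_congr fun x _ => h1 x]
      exact orth_ext s hs P hdeg horth _ _ le_rfl
        (lt_of_le_of_lt ((natDegree_C_mul_le _ _)) hqdeg)
    -- integral of r equals quadrature of r
    have hrint : (∫ x in (0:ℝ)..1, r.eval x) = ∑ k, b k * r.eval (c k) := by
      have hinterp := Lagrange.eq_interpolate (f := r) hcinj hrdeg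
      calc (∫ x in (0:ℝ)..1, r.eval x)
          = ∫ x in (0:ℝ)..1, ∑ k, r.eval (c k) * (ℓ k).eval x := by
            refine intervalIntegral.integral_congr fun x _ => ?_
            conv_lhs => rw [hinterp]
            rw [Lagrange.interpolate_apply, eval_finset_sum]
            exact Finset.sum_congr rfl fun k _ => by rw [eval_mul, eval_C]
        _ = ∑ k, r.eval (c k) * ∫ x in (0:ℝ)..1, (ℓ k).eval x := by
            rw [intervalIntegral.integral_finset_sum]
            · exact Finset.sum_congr rfl fun k _ => by
                rw [intervalIntegral.integral_const_mul]
            · exact fun k _ => (continuous_const.mul (ℓ k).continuous).intervalIntegrable 0 1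
        _ = ∑ k, b k * r.eval (c k) := by
            refine Finset.sum_congr rfl fun k _ => ?_
            rw [hbj k, integral_eval, antid_eval_zero, sub_zero, mul_comm]
    -- combine
    have hsum : ∑ k, b k * p.eval (c k) = ∑ k, b k * r.eval (c k) := by
      refine Finset.sum_congr rfl fun k _ => ?_
      conv_lhs => rw [hdecomp]
      rw [eval_add, eval_mul, hMzero k, zero_mul, zero_add]
    have hintsplit : (∫ x in (0:ℝ)..1, p.eval x)
        = (∫ x in (0:ℝ)..1, (M * q).eval x) + ∫ x in (0:ℝ)..1, r.eval x := by
      rw [← intervalIntegral.integral_add ((M * q).continuous.intervalIntegrable 0 1)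
        (r.continuous.intervalIntegrable 0 1)]
      refine intervalIntegral.integral_congr fun x _ => ?_
      conv_lhs => rw [hdecomp]
      rw [eval_add]
    rw [hintsplit, hMq, zero_add, hrint, hsum]
  -- entrywise identity
  have hent : ∀ i j, b i * A i j + b j * A j i = b i * b j := by
    intro i j
    set G : Polynomial ℝ := ℓ i * antid (ℓ j) + antid (ℓ i) * ℓ j with hG
    have hGdeg : G.natDegree < 2 * s := by
      rw [hG]
      refine lt_of_le_of_lt (natDegree_add_le _ _) ?_
      have h1 := natDegree_mul_le (p := ℓ i) (q := antid (ℓ j))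
      have h2 := natDegree_mul_le (p := antid (ℓ i)) (q := ℓ j)
      have h3 := antid_natDegree_le (ℓ i)
      have h4 := antid_natDegree_le (ℓ j)
      have h5 := hdegℓ i
      have h6 := hdegℓ j
      simp only [max_lt_iff]
      omega
    have hG' : (antid (ℓ i) * antid (ℓ j)).derivative = G := by
      rw [derivative_mul, antid_deriv, antid_deriv]
    have hint : (∫ x in (0:ℝ)..1, G.eval x) = b i * b j := by
      rw [← hG', integral_deriv_poly, eval_mul, eval_mul, antid_eval_zero, antid_eval_zero,
        hbj i, hbj j, zero_mul, sub_zero]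
    have hevalG : ∀ k, G.eval (c k)
        = (if i = k then (antid (ℓ j)).eval (c k) else 0)
          + (if j = k then (antid (ℓ i)).eval (c k) else 0) := by
      intro k
      rw [hG, eval_add, eval_mul, eval_mul]
      congr 1
      · by_cases h : i = k
        · subst h
          rw [if_pos rfl, Lagrange.eval_basis_self hcinj (mem_univ i), one_mul]
        · rw [if_neg h, Lagrange.eval_basis_of_ne h (mem_univ k), zero_mul]
      · by_cases h : j = k
        · subst h
          rw [if_pos rfl, Lagrange.eval_basis_self hcinj (mem_univ j), mul_one]
        · rw [if_neg h, Lagrange.eval_basis_of_ne h (mem_univ k), mul_zero]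
    have hq := hquad G hGdeg
    rw [hint] at hq
    rw [hq]
    have : ∀ k, b k * G.eval (c k)
        = (if i = k then b k * (antid (ℓ j)).eval (c k) else 0)
          + (if j = k then b k * (antid (ℓ i)).eval (c k) else 0) := by
      intro k
      rw [hevalG k, mul_add]
      congr 1 <;> split <;> ring
    rw [Finset.sum_congr rfl fun k _ => this k, Finset.sum_add_distrib,
      Finset.sum_ite_eq univ i _, Finset.sum_ite_eq univ j _, if_pos (mem_univ i),
      if_pos (mem_univ j), ← hAij i j, ← hAij j i]
  -- conclude
  have hSent : ∀ i j, (Ω * A) i j + (Ω * A) j i = b i * b j := by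
    intro i j
    rw [hΩ, Matrix.diagonal_mul, Matrix.diagonal_mul]
    exact hent i j
  constructor
  · ext i j
    rw [Matrix.add_apply, hΩ, Matrix.diagonal_mul, Matrix.mul_diagonal,
      Matrix.transpose_apply, Matrix.vecMulVec_apply]
    have := hent i j
    linarith [hent i j]
  · intro x
    have hT : x ⬝ᵥ (Ω * A).mulVec x = ∑ i, ∑ j, x i * (Ω * A) i j * x j := by
      simp only [dotProduct, Matrix.mulVec]
      refine Finset.sum_congr rfl fun i _ => ?_
      rw [Finset.mul_sum]
      exact Finset.sum_congr rfl fun j _ => (mul_assoc _ _ _).symm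
    have h2 : 2 * (x ⬝ᵥ (Ω * A).mulVec x) = (b ⬝ᵥ x) ^ 2 := by
      have hT2 : x ⬝ᵥ (Ω * A).mulVec x = ∑ i, ∑ j, x j * (Ω * A) j i * x i := by
        rw [hT, Finset.sum_comm]
      calc 2 * (x ⬝ᵥ (Ω * A).mulVec x)
          = (∑ i, ∑ j, x i * (Ω * A) i j * x j) + ∑ i, ∑ j, x j * (Ω * A) j i * x i := by
            rw [← hT, ← hT2]; ring
        _ = ∑ i, ∑ j, (x i * x j) * ((Ω * A) i j + (Ω * A) j i) := by
            rw [← Finset.sum_add_distrib]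
            refine Finset.sum_congr rfl fun i _ => ?_
            rw [← Finset.sum_add_distrib]
            refine Finset.sum_congr rfl fun j _ => by ring
        _ = ∑ i, ∑ j, (b i * x i) * (b j * x j) := by
            refine Finset.sum_congr rfl fun i _ => Finset.sum_congr rfl fun j _ => ?_
            rw [hSent i j]; ring
        _ = (∑ i, b i * x i) * (∑ j, b j * x j) := by
            rw [Finset.sum_mul_sum]
        _ = (b ⬝ᵥ x) ^ 2 := by rw [dotProduct]; ring
    constructor
    · linarith
    · nlinarith [sq_nonneg (b ⬝ᵥ x)]
end

section
/- Under the conditions of the energy-conservation theorem for the discretized method with k-point quadrature (k ≥ s): if the discrete hidden constraints ∇g(u(c_ih))ᵀM⁻¹v(c_ih) = 0 hold for i = 1,...,s, and the quadrature errors satisfy ψ_j(u) − ψ̂_j(u) = Δ̂_j(h) = O(h^{2k−j}) while γ_j(v) = O(h^j), then H(u(h),v(h)) − H(q_0,p_0) = −h Σ_{j=0}^{s−1} γ_j(v)ᵀM⁻¹Δ̂_j(h) = O(h^{2k+1}). -/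
open Polynomial Matrix Finset

lemma hbvm_Pne (P : ℕ → Polynomial ℝ)
    (horth : ∀ i j, (∫ x in (0:ℝ)..1, (P i).eval x * (P j).eval x)
      = if i = j then 1 else 0) (n : ℕ) : P n ≠ 0 := by
  intro h0
  have := horth n n
  rw [h0] at this
  simp at this

lemma hbvm_orth_Ps (s : ℕ) (P : ℕ → Polynomial ℝ)
    (hdeg : ∀ j, (P j).natDegree = j)
    (horth : ∀ i j, (∫ x in (0:ℝ)..1, (P i).eval x * (P j).eval x)
      = if i = j then 1 else 0) :
    ∀ (n : ℕ), n ≤ s → ∀ p : Polynomial ℝ, p.degree < (n : WithBot ℕ) →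
      (∫ x in (0:ℝ)..1, p.eval x * (P s).eval x) = 0 := by
  intro n
  induction n with
  | zero =>
    intro _ p hp
    have : p = 0 := by
      rw [← Polynomial.degree_eq_bot]
      exact Nat.WithBot.lt_zero_iff.mp (by exact_mod_cast hp)
    simp [this]
  | succ n ih =>
    intro hns p hp
    have hPn0 : P n ≠ 0 := hbvm_Pne P horth n
    have hlc : (P n).coeff n ≠ 0 := by
      have := Polynomial.leadingCoeff_ne_zero.2 hPn0
      rwa [Polynomial.leadingCoeff, hdeg n] at this
    have hdegPn : (P n).degree ≤ (n : WithBot ℕ) := by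
      rw [Polynomial.degree_eq_natDegree hPn0, hdeg n]
    obtain ⟨a, p', hsplit, hp'deg⟩ :
        ∃ (a : ℝ) (p' : Polynomial ℝ), p = p' + Polynomial.C a * P n
          ∧ p'.degree < (n : WithBot ℕ) := by
      refine ⟨p.coeff n / (P n).coeff n, p - Polynomial.C (p.coeff n / (P n).coeff n) * P n,
        by ring, ?_⟩
      rw [Polynomial.degree_lt_iff_coeff_zero]
      intro mm hm
      rcases eq_or_lt_of_le hm with rfl | hlt
      · simp only [Polynomial.coeff_sub, Polynomial.coeff_C_mul]
        rw [div_mul_cancel₀ _ hlc]; ring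
      · have h1 : p.coeff mm = 0 := by
          apply Polynomial.coeff_eq_zero_of_degree_lt
          exact lt_of_lt_of_le hp (by exact_mod_cast hlt)
        have h2 : (P n).coeff mm = 0 := by
          apply Polynomial.coeff_eq_zero_of_degree_lt
          exact lt_of_le_of_lt hdegPn (by exact_mod_cast hlt)
        simp [h1, h2]
    have hfun : (fun x => p.eval x * (P s).eval x)
        = fun x => p'.eval x * (P s).eval x
            + a * ((P n).eval x * (P s).eval x) := by
      funext x; rw [hsplit]; simp; ring
    rw [hfun, intervalIntegral.integral_add
        ((p'.continuous.fun_mul (P s).continuous).intervalIntegrable 0 1)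
        ((continuous_const.fun_mul ((P n).continuous.fun_mul (P s).continuous)).intervalIntegrable 0 1),
      intervalIntegral.integral_const_mul,
      ih (le_of_lt (Nat.lt_of_succ_le hns)) p' hp'deg, horth n s]
    have : n ≠ s := Nat.ne_of_lt (Nat.lt_of_succ_le hns)
    simp [this]

lemma hbvm_orth_key (s : ℕ) (hs : 0 < s) (P : ℕ → Polynomial ℝ)
    (hdeg : ∀ j, (P j).natDegree = j)
    (horth : ∀ i j, (∫ x in (0:ℝ)..1, (P i).eval x * (P j).eval x)
      = if i = j then 1 else 0)
    (c : Fin s → ℝ) (hinj : Function.Injective c)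
    (hzero : ∀ i, (P s).eval (c i) = 0)
    (p q : Polynomial ℝ) (hp : p.degree < (s : WithBot ℕ))
    (hq : q.degree ≤ (s : WithBot ℕ)) (hqc : ∀ i, q.eval (c i) = 0) :
    (∫ x in (0:ℝ)..1, p.eval x * q.eval x) = 0 := by
  have hPs0 : P s ≠ 0 := hbvm_Pne P horth s
  have hlc : (P s).coeff s ≠ 0 := by
    have := Polynomial.leadingCoeff_ne_zero.2 hPs0
    rwa [Polynomial.leadingCoeff, hdeg s] at this
  have hdegPs : (P s).degree ≤ (s : WithBot ℕ) := by
    rw [Polynomial.degree_eq_natDegree hPs0, hdeg s]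
  set a : ℝ := q.coeff s / (P s).coeff s with ha
  have hr : q - Polynomial.C a * P s = 0 := by
    apply Polynomial.eq_zero_of_degree_lt_of_eval_index_eq_zero (Finset.univ : Finset (Fin s))
      (hinj.injOn)
    · rw [Finset.card_univ, Fintype.card_fin]
      rw [Polynomial.degree_lt_iff_coeff_zero]
      intro mm hm
      rcases eq_or_lt_of_le hm with rfl | hlt
      · simp only [Polynomial.coeff_sub, Polynomial.coeff_C_mul]
        rw [ha, div_mul_cancel₀ _ hlc]; ring
      · have h1 : q.coeff mm = 0 := by
          apply Polynomial.coeff_eq_zero_of_degree_lt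
          exact lt_of_le_of_lt hq (by exact_mod_cast hlt)
        have h2 : (P s).coeff mm = 0 := by
          apply Polynomial.coeff_eq_zero_of_degree_lt
          exact lt_of_le_of_lt hdegPs (by exact_mod_cast hlt)
        simp [h1, h2]
    · intro i _
      simp [hqc i, hzero i]
  have hqeq : q = Polynomial.C a * P s := by
    have := sub_eq_zero.mp hr; exact this
  have hfun : (fun x => p.eval x * q.eval x)
      = fun x => a * (p.eval x * (P s).eval x) := by
    funext x; rw [hqeq]; simp; ring
  rw [hfun, intervalIntegral.integral_const_mul,
    hbvm_orth_Ps s P hdeg horth s le_rfl p hp]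
  simp

lemma hbvm_node_int (s : ℕ) (hs : 0 < s) (P : ℕ → Polynomial ℝ)
    (hdeg : ∀ j, (P j).natDegree = j)
    (horth : ∀ i j, (∫ x in (0:ℝ)..1, (P i).eval x * (P j).eval x)
      = if i = j then 1 else 0)
    (c : Fin s → ℝ) (hinj : Function.Injective c)
    (hzero : ∀ i, (P s).eval (c i) = 0)
    (ℓ : Fin s → ℝ → ℝ)
    (hℓ : ∀ i (x : ℝ), ℓ i x = ∏ k ∈ Finset.univ.erase i, ((x - c k) / (c i - c k)))
    (i : Fin s) (Q : Polynomial ℝ) (hQdeg : Q.natDegree ≤ s)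
    (hQi : Q.eval (c i) = 0) :
    (∫ x in (0:ℝ)..1, ℓ i x * Q.eval x) = 0 := by
  obtain ⟨R, hR⟩ : (Polynomial.X - Polynomial.C (c i)) ∣ Q :=
    Polynomial.dvd_iff_isRoot.mpr hQi
  rcases eq_or_ne R 0 with rfl | hR0
  · rw [hR]; simp
  have hQ0 : Q ≠ 0 := by
    rw [hR]; exact mul_ne_zero (Polynomial.X_sub_C_ne_zero _) hR0
  have hRdeg : R.degree < (s : WithBot ℕ) := by
    have h1 : Q.natDegree = 1 + R.natDegree := by
      rw [hR, Polynomial.natDegree_mul (Polynomial.X_sub_C_ne_zero _) hR0,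
        Polynomial.natDegree_X_sub_C]
    have h2 : R.natDegree < s := by omega
    rw [Polynomial.degree_eq_natDegree hR0]
    exact_mod_cast h2
  set κ : ℝ := ∏ k ∈ Finset.univ.erase i, (c i - c k)⁻¹ with hκ
  set N : Polynomial ℝ := ∏ k : Fin s, (Polynomial.X - Polynomial.C (c k)) with hN
  have hNdeg : N.degree ≤ (s : WithBot ℕ) := by
    rw [hN]
    apply le_trans (Polynomial.degree_prod_le _ _)
    simp [Polynomial.degree_X_sub_C]
  have hNzero : ∀ r, N.eval (c r) = 0 := by
    intro r
    rw [hN, Polynomial.eval_prod]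
    exact Finset.prod_eq_zero (Finset.mem_univ r) (by simp)
  have hfun : (fun x => ℓ i x * Q.eval x) = fun x => κ * (R.eval x * N.eval x) := by
    funext x
    rw [hℓ i x, hR]
    simp only [Polynomial.eval_mul, Polynomial.eval_sub, Polynomial.eval_X, Polynomial.eval_C]
    have e1 : ∏ k ∈ Finset.univ.erase i, ((x - c k) / (c i - c k))
        = (∏ k ∈ Finset.univ.erase i, (x - c k)) * κ := by
      rw [hκ, ← Finset.prod_mul_distrib]
      exact Finset.prod_congr rfl fun k _ => div_eq_mul_inv _ _
    have e2 : (x - c i) * ∏ k ∈ Finset.univ.erase i, (x - c k) = N.eval x := by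
      rw [hN, Polynomial.eval_prod]
      simp only [Polynomial.eval_sub, Polynomial.eval_X, Polynomial.eval_C]
      exact Finset.mul_prod_erase Finset.univ (fun k => x - c k) (Finset.mem_univ i)
    rw [e1, ← e2]; ring
  rw [hfun, intervalIntegral.integral_const_mul,
    hbvm_orth_key s hs P hdeg horth c hinj hzero R N hRdeg hNdeg hNzero]
  simp
/-- Near energy conservation for the discretized HBVM(k,s) method: if the discrete
hidden constraints hold, the quadrature errors satisfy `‖ψ_j − ψ̂_j‖ ≤ C h^{2K−j}` and
`‖γ_j(v)‖ ≤ C h^j`, then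
`H(u(h),v(h)) − H(q₀,p₀) = −h Σ_{j<s} γ_j(v)ᵀ M⁻¹ (ψ_j − ψ̂_j) = O(h^{2K+1})`. -/
theorem stmt16 (s K m ν : ℕ) (hs : 0 < s) (hsK : s ≤ K) (C : ℝ) (hC : 0 < C)
    (P : ℕ → Polynomial ℝ)
    (hdeg : ∀ j, (P j).natDegree = j)
    (horth : ∀ i j, (∫ x in (0:ℝ)..1, (P i).eval x * (P j).eval x)
      = if i = j then 1 else 0)
    (c : Fin s → ℝ) (hmono : StrictMono c)
    (hmem : ∀ i, c i ∈ Set.Ioo (0:ℝ) 1)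
    (hzero : ∀ i, (P s).eval (c i) = 0)
    (M : Matrix (Fin m) (Fin m) ℝ) (hM : M.PosDef)
    (U : (Fin m → ℝ) → ℝ) (hU : ContDiff ℝ ⊤ U)
    (g : (Fin m → ℝ) → (Fin ν → ℝ)) (hg : ContDiff ℝ ⊤ g)
    (gradU : (Fin m → ℝ) → Fin m → ℝ)
    (hgradU : ∀ x k, gradU x k = fderiv ℝ U x (Pi.single k 1))
    (Jg : (Fin m → ℝ) → Matrix (Fin m) (Fin ν) ℝ)
    (hJg : ∀ x k a, Jg x k a = fderiv ℝ (fun y => g y a) x (Pi.single k 1))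
    (q0 p0 : Fin m → ℝ)
    (ℓ : Fin s → ℝ → ℝ)
    (hℓ : ∀ i (x : ℝ), ℓ i x = ∏ k ∈ Finset.univ.erase i, ((x - c k) / (c i - c k)))
    -- families, indexed by the stepsize h
    (u v : ℝ → Fin m → Polynomial ℝ)
    (uval vval : ℝ → ℝ → Fin m → ℝ)
    (γ ψ ψhat : ℝ → ℕ → Fin m → ℝ)
    (lam : ℝ → Fin s → Fin ν → ℝ)
    (h₀ : ℝ) (hh₀ : 0 < h₀) (hh₀1 : h₀ ≤ 1)
    (hdegu : ∀ h ∈ Set.Ioc (0:ℝ) h₀, ∀ k, (u h k).natDegree ≤ s)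
    (hdegv : ∀ h ∈ Set.Ioc (0:ℝ) h₀, ∀ k, (v h k).natDegree ≤ s)
    (huval : ∀ h ∈ Set.Ioc (0:ℝ) h₀, ∀ t k, uval h t k = (u h k).eval t)
    (hvval : ∀ h ∈ Set.Ioc (0:ℝ) h₀, ∀ t k, vval h t k = (v h k).eval t)
    (hu0 : ∀ h ∈ Set.Ioc (0:ℝ) h₀, uval h 0 = q0)
    (hv0 : ∀ h ∈ Set.Ioc (0:ℝ) h₀, vval h 0 = p0)
    (hγ : ∀ h ∈ Set.Ioc (0:ℝ) h₀, ∀ j k,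
      γ h j k = ∫ x in (0:ℝ)..1, (P j).eval x * vval h (x * h) k)
    (hψ : ∀ h ∈ Set.Ioc (0:ℝ) h₀, ∀ j k,
      ψ h j k = ∫ x in (0:ℝ)..1, (P j).eval x * gradU (uval h (x * h)) k)
    (hode_u : ∀ h ∈ Set.Ioc (0:ℝ) h₀, ∀ x ∈ Set.Icc (0:ℝ) 1, ∀ k,
      (Polynomial.derivative (u h k)).eval (x * h)
        = ∑ j ∈ Finset.range s, (P j).eval x * (M⁻¹.mulVec (γ h j)) k)
    (hode_v : ∀ h ∈ Set.Ioc (0:ℝ) h₀, ∀ x ∈ Set.Icc (0:ℝ) 1, ∀ k,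
      (Polynomial.derivative (v h k)).eval (x * h)
        = ∑ j ∈ Finset.range s, (P j).eval x * ψhat h j k
          - ∑ i, ℓ i x * ((Jg (uval h (c i * h))).mulVec (lam h i)) k)
    (hhid : ∀ h ∈ Set.Ioc (0:ℝ) h₀, ∀ i : Fin s,
      (Jg (uval h (c i * h))).transpose.mulVec (M⁻¹.mulVec (vval h (c i * h))) = 0)
    (hΔ : ∀ h ∈ Set.Ioc (0:ℝ) h₀, ∀ j < s, ‖ψ h j - ψhat h j‖ ≤ C * h ^ (2 * K - j))
    (hγb : ∀ h ∈ Set.Ioc (0:ℝ) h₀, ∀ j < s, ‖γ h j‖ ≤ C * h ^ j) :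
    (∀ h ∈ Set.Ioc (0:ℝ) h₀,
      ((1/2) * (vval h h ⬝ᵥ M⁻¹.mulVec (vval h h)) - U (uval h h))
        - ((1/2) * (p0 ⬝ᵥ M⁻¹.mulVec p0) - U q0)
      = -h * ∑ j ∈ Finset.range s, γ h j ⬝ᵥ M⁻¹.mulVec (ψ h j - ψhat h j)) ∧
    ∃ C' : ℝ, 0 < C' ∧ ∀ h ∈ Set.Ioc (0:ℝ) h₀,
      |((1/2) * (vval h h ⬝ᵥ M⁻¹.mulVec (vval h h)) - U (uval h h))
        - ((1/2) * (p0 ⬝ᵥ M⁻¹.mulVec p0) - U q0)| ≤ C' * h ^ (2 * K + 1) := by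
  classical
  have hcinj : Function.Injective c := hmono.injective
  have hAsymm : ∀ k l, M⁻¹ k l = M⁻¹ l k := by
    have hMt : Mᵀ = M := hM.isHermitian
    have h1 : (M⁻¹)ᵀ = M⁻¹ := by
      rw [Matrix.transpose_nonsing_inv, hMt]
    intro k l
    conv_rhs => rw [← h1]
    rfl
  have hflip : ∀ (a b : Fin m → ℝ),
      (∑ k, a k * M⁻¹.mulVec b k) = ∑ k, b k * M⁻¹.mulVec a k := by
    intro a b
    simp only [Matrix.mulVec, dotProduct, Finset.mul_sum]
    rw [Finset.sum_comm]
    exact Finset.sum_congr rfl fun k _ => Finset.sum_congr rfl fun l _ => by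
      rw [hAsymm l k]; ring
  have key : ∀ h ∈ Set.Ioc (0:ℝ) h₀,
      ((1/2) * (vval h h ⬝ᵥ M⁻¹.mulVec (vval h h)) - U (uval h h))
        - ((1/2) * (p0 ⬝ᵥ M⁻¹.mulVec p0) - U q0)
      = -h * ∑ j ∈ Finset.range s, γ h j ⬝ᵥ M⁻¹.mulVec (ψ h j - ψhat h j) := by
    intro h hh
    obtain ⟨hpos, hleh⟩ := hh
    have hIoc : h ∈ Set.Ioc (0:ℝ) h₀ := ⟨hpos, hleh⟩
    have hne : h ≠ 0 := ne_of_gt hpos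
    set uu : ℝ → Fin m → ℝ := fun x k => (u h k).eval (x * h) with huu
    set vv : ℝ → Fin m → ℝ := fun x k => (v h k).eval (x * h) with hvv
    have huval' : ∀ x, uval h (x * h) = uu x := fun x => funext fun k => by
      rw [huval h hIoc (x*h) k, huu]
    have hvval' : ∀ x, vval h (x * h) = vv x := fun x => funext fun k => by
      rw [hvval h hIoc (x*h) k, hvv]
    set dv : ℝ → Fin m → ℝ := fun x k => h * (Polynomial.derivative (v h k)).eval (x * h) with hdv
    set du : ℝ → Fin m → ℝ := fun x k => h * (Polynomial.derivative (u h k)).eval (x * h) with hdu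
    set gU : ℝ → Fin m → ℝ := fun x k => gradU (uu x) k with hgU
    set G : ℝ → ℝ := fun x => (∑ k, dv x k * M⁻¹.mulVec (vv x) k)
      - (∑ k, gU x k * du x k) with hG
    set F : ℝ → ℝ := fun x => 1/2 * (∑ k, vv x k * ∑ l, M⁻¹ k l * vv x l) - U (uu x) with hF
    -- derivatives of the polynomial paths
    have hvd : ∀ (k : Fin m) (x : ℝ), HasDerivAt (fun y => vv y k) (dv x k) x := by
      intro k x
      have h1 : HasDerivAt (fun y : ℝ => y * h) h x := by
        simpa using (hasDerivAt_id x).mul_const h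
      have h2 : HasDerivAt (fun y : ℝ => (v h k).eval (y * h))
          ((Polynomial.derivative (v h k)).eval (x*h) * h) x :=
        HasDerivAt.comp (h₂ := fun y => (v h k).eval y) x ((v h k).hasDerivAt (x*h)) h1
      simp only [hvv, hdv]
      simpa [mul_comm] using h2
    have hud : ∀ (k : Fin m) (x : ℝ), HasDerivAt (fun y => uu y k) (du x k) x := by
      intro k x
      have h1 : HasDerivAt (fun y : ℝ => y * h) h x := by
        simpa using (hasDerivAt_id x).mul_const h
      have h2 : HasDerivAt (fun y : ℝ => (u h k).eval (y * h))
          ((Polynomial.derivative (u h k)).eval (x*h) * h) x :=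
        HasDerivAt.comp (h₂ := fun y => (u h k).eval y) x ((u h k).hasDerivAt (x*h)) h1
      simp only [huu, hdu]
      simpa [mul_comm] using h2
    -- continuity facts
    have cvv : ∀ k, Continuous fun x => vv x k := fun k =>
      continuous_iff_continuousAt.2 fun x => (hvd k x).continuousAt
    have cuuk : ∀ k, Continuous fun x => uu x k := fun k =>
      continuous_iff_continuousAt.2 fun x => (hud k x).continuousAt
    have cuu : Continuous uu := continuous_pi cuuk
    have cdv : ∀ k, Continuous fun x => dv x k := by
      intro k
      simp only [hdv]
      exact continuous_const.mul
        ((Polynomial.derivative (v h k)).continuous.comp (continuous_id.mul continuous_const))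
    have cdu : ∀ k, Continuous fun x => du x k := by
      intro k
      simp only [hdu]
      exact continuous_const.mul
        ((Polynomial.derivative (u h k)).continuous.comp (continuous_id.mul continuous_const))
    have cgU : ∀ k, Continuous fun x => gU x k := by
      intro k
      have h1 : Continuous (fun x => fderiv ℝ U (uu x)) :=
        (hU.continuous_fderiv (by simp)).comp cuu
      have h2 : Continuous fun x => (fderiv ℝ U (uu x)) (Pi.single k 1) :=
        h1.clm_apply continuous_const
      simp only [hgU, hgradU]
      exact h2
    have cℓ : ∀ i, Continuous (ℓ i) := by
      intro i
      have : (ℓ i) = fun x => ∏ k ∈ Finset.univ.erase i, ((x - c k) / (c i - c k)) :=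
        funext (hℓ i)
      rw [this]
      exact continuous_finset_prod _ fun k _ =>
        (continuous_id.sub continuous_const).div_const _
    have cmv : ∀ k, Continuous fun x => M⁻¹.mulVec (vv x) k := by
      intro k
      simp only [Matrix.mulVec, dotProduct]
      exact continuous_finset_sum _ fun l _ => continuous_const.mul (cvv l)
    -- derivative of the energy along the path
    have hFd : ∀ x, HasDerivAt F (G x) x := by
      intro x
      have hquad : HasDerivAt (fun y => 1/2 * (∑ k, vv y k * ∑ l, M⁻¹ k l * vv y l))
          (1/2 * (∑ k, (dv x k * (∑ l, M⁻¹ k l * vv x l)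
             + vv x k * (∑ l, M⁻¹ k l * dv x l)))) x :=
        HasDerivAt.const_mul _ (HasDerivAt.fun_sum fun k _ =>
          (hvd k x).fun_mul (HasDerivAt.fun_sum fun l _ => (hvd l x).const_mul _))
      have huuD : HasDerivAt uu (du x) x := hasDerivAt_pi.mpr fun k => hud k x
      have hUD : HasDerivAt (fun y => U (uu y)) ((fderiv ℝ U (uu x)) (du x)) x :=
        (((hU.differentiable (by simp)) (uu x)).hasFDerivAt).comp_hasDerivAt x huuD
      have hsingle : du x = ∑ k, du x k • (Pi.single k 1 : Fin m → ℝ) := by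
        funext j
        rw [Finset.sum_apply]
        simp [Pi.single_apply]
      have hL : (fderiv ℝ U (uu x)) (du x) = ∑ k, gU x k * du x k := by
        conv_lhs => rw [hsingle]
        rw [map_sum]
        refine Finset.sum_congr rfl fun k _ => ?_
        rw [_root_.map_smul]
        simp only [hgU, hgradU]
        simp [smul_eq_mul]
        ring
      have hD := hquad.sub hUD
      rw [hL] at hD
      have hGx : G x = 1/2 * (∑ k, (dv x k * (∑ l, M⁻¹ k l * vv x l)
             + vv x k * (∑ l, M⁻¹ k l * dv x l))) - ∑ k, gU x k * du x k := by
        have hsym : ∑ k, vv x k * (∑ l, M⁻¹ k l * dv x l)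
            = ∑ k, dv x k * (∑ l, M⁻¹ k l * vv x l) := by
          have := hflip (vv x) (dv x)
          simpa [Matrix.mulVec, dotProduct] using this
        simp only [hG]
        congr 1
        simp only [Matrix.mulVec, dotProduct]
        rw [Finset.sum_add_distrib, hsym]
        ring
      rw [hGx]
      exact hD
    have hGcont : Continuous G := by
      simp only [hG]
      exact (continuous_finset_sum _ fun k _ => (cdv k).mul (cmv k)).sub
        (continuous_finset_sum _ fun k _ => (cgU k).mul (cdu k))
    have hFTC : ∫ x in (0:ℝ)..1, G x = F 1 - F 0 :=
      intervalIntegral.integral_eq_sub_of_hasDerivAt (fun x _ => hFd x)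
        (hGcont.intervalIntegrable 0 1)
    -- endpoints
    have hF1 : ((1/2) * (vval h h ⬝ᵥ M⁻¹.mulVec (vval h h)) - U (uval h h)) = F 1 := by
      have e1 : uval h h = uu 1 := by rw [← huval' 1, one_mul]
      have e2 : vval h h = vv 1 := by rw [← hvval' 1, one_mul]
      rw [e1, e2, hF]
      simp [dotProduct, Matrix.mulVec]
    have hF0 : ((1/2) * (p0 ⬝ᵥ M⁻¹.mulVec p0) - U q0) = F 0 := by
      have e1 : q0 = uu 0 := by
        rw [← hu0 h hIoc, ← huval' 0, zero_mul]
      have e2 : p0 = vv 0 := by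
        rw [← hv0 h hIoc, ← hvval' 0, zero_mul]
      rw [e1, e2, hF]
      simp [dotProduct, Matrix.mulVec]
    -- the auxiliary polynomials for the constraint terms
    set Qp : Fin s → Fin ν → Polynomial ℝ := fun i a =>
      ∑ k, ∑ l, Polynomial.C (Jg (uval h (c i * h)) k a * M⁻¹ k l)
        * ((v h l).comp (Polynomial.C h * Polynomial.X)) with hQp
    have hQeval : ∀ i a x, (Qp i a).eval x
        = ∑ k, ∑ l, Jg (uval h (c i * h)) k a * M⁻¹ k l * vv x l := by
      intro i a x
      simp only [hQp, Polynomial.eval_finset_sum, Polynomial.eval_mul, Polynomial.eval_C,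
        Polynomial.eval_comp, Polynomial.eval_X, hvv]
      refine Finset.sum_congr rfl fun k _ => Finset.sum_congr rfl fun l _ => ?_
      rw [mul_comm h x]
    have hQdeg : ∀ i a, (Qp i a).natDegree ≤ s := by
      intro i a
      simp only [hQp]
      apply Polynomial.natDegree_sum_le_of_forall_le
      intro k _
      apply Polynomial.natDegree_sum_le_of_forall_le
      intro l _
      refine le_trans (Polynomial.natDegree_C_mul_le _ _) ?_
      refine le_trans Polynomial.natDegree_comp_le ?_
      rw [Polynomial.natDegree_C_mul_X _ hne, mul_one]
      exact hdegv h hIoc l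
    have hQzero : ∀ i a, (Qp i a).eval (c i) = 0 := by
      intro i a
      have h0 := congrFun (hhid h hIoc i) a
      simp only [Matrix.mulVec, dotProduct, Matrix.transpose_apply,
        Pi.zero_apply] at h0
      rw [hQeval, ← h0]
      refine Finset.sum_congr rfl fun k _ => ?_
      rw [Finset.mul_sum]
      refine Finset.sum_congr rfl fun l _ => ?_
      rw [hvval h hIoc (c i * h) l]
      simp only [hvv]
      ring
    -- base integrals
    have hB1 : ∀ (j : ℕ) (k : Fin m),
        (∫ x in (0:ℝ)..1, (P j).eval x * M⁻¹.mulVec (vv x) k)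
          = M⁻¹.mulVec (γ h j) k := by
      intro j k
      have e : (fun x => (P j).eval x * M⁻¹.mulVec (vv x) k)
          = fun x => ∑ l, M⁻¹ k l * ((P j).eval x * vv x l) := by
        funext x
        simp only [Matrix.mulVec, dotProduct, Finset.mul_sum]
        exact Finset.sum_congr rfl fun l _ => by ring
      rw [e, intervalIntegral.integral_finset_sum (fun l _ =>
        (continuous_const.fun_mul ((P j).continuous.fun_mul (cvv l))).intervalIntegrable 0 1)]
      simp only [intervalIntegral.integral_const_mul, Matrix.mulVec, dotProduct]
      refine Finset.sum_congr rfl fun l _ => ?_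
      congr 1
      rw [hγ h hIoc j l]
      congr 1
      funext x
      rw [hvval h hIoc (x*h) l]
    have hB2 : ∀ (i : Fin s) (a : Fin ν),
        (∫ x in (0:ℝ)..1, ℓ i x * (Qp i a).eval x) = 0 := fun i a =>
      hbvm_node_int s hs P hdeg horth c hcinj hzero ℓ hℓ i _ (hQdeg i a) (hQzero i a)
    have hB3 : ∀ (j : ℕ) (k : Fin m),
        (∫ x in (0:ℝ)..1, (P j).eval x * gU x k) = ψ h j k := by
      intro j k
      rw [hψ h hIoc j k]
      congr 1
      funext x
      rw [huval' x]
    -- rewrite G on [0,1] using the ODEs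
    have hGeq : Set.EqOn G (fun x =>
        (∑ j ∈ Finset.range s, ∑ k, (h * ψhat h j k) * ((P j).eval x * M⁻¹.mulVec (vv x) k))
          - (∑ i : Fin s, ∑ a : Fin ν, (h * lam h i a) * (ℓ i x * (Qp i a).eval x))
          - (∑ j ∈ Finset.range s, ∑ k, (h * M⁻¹.mulVec (γ h j) k) * ((P j).eval x * gU x k)))
        (Set.uIcc (0:ℝ) 1) := by
      intro x hx
      rw [Set.uIcc_of_le (by norm_num : (0:ℝ) ≤ 1)] at hx
      have hdvx : ∀ k, dv x k = h * ((∑ j ∈ Finset.range s, (P j).eval x * ψhat h j k)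
          - ∑ i, ℓ i x * ((Jg (uval h (c i * h))).mulVec (lam h i)) k) := by
        intro k
        simp only [hdv]
        rw [hode_v h hIoc x hx k]
      have hdux : ∀ k, du x k
          = h * ∑ j ∈ Finset.range s, (P j).eval x * M⁻¹.mulVec (γ h j) k := by
        intro k
        simp only [hdu]
        rw [hode_u h hIoc x hx k]
      have hc1 : ∀ i, (∑ a, lam h i a * (Qp i a).eval x)
          = ∑ k, ((Jg (uval h (c i * h))).mulVec (lam h i)) k * M⁻¹.mulVec (vv x) k := by
        intro i
        simp only [hQeval, Matrix.mulVec, dotProduct, Finset.mul_sum, Finset.sum_mul]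
        rw [Finset.sum_comm]
        refine Finset.sum_congr rfl fun k _ => ?_
        rw [Finset.sum_comm]
        refine Finset.sum_congr rfl fun l _ => Finset.sum_congr rfl fun a _ => by ring
      have e1 : ∑ k, dv x k * M⁻¹.mulVec (vv x) k
          = (∑ j ∈ Finset.range s, ∑ k, (h * ψhat h j k) * ((P j).eval x * M⁻¹.mulVec (vv x) k))
            - ∑ i : Fin s, ∑ a : Fin ν, (h * lam h i a) * (ℓ i x * (Qp i a).eval x) := by
        have s1 : ∀ k, dv x k * M⁻¹.mulVec (vv x) k
            = (∑ j ∈ Finset.range s, (h * ψhat h j k) * ((P j).eval x * M⁻¹.mulVec (vv x) k))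
              - ∑ i : Fin s, (h * ℓ i x) * (((Jg (uval h (c i * h))).mulVec (lam h i)) k
                  * M⁻¹.mulVec (vv x) k) := by
          intro k
          rw [hdvx k, mul_sub, sub_mul]
          congr 1
          · rw [Finset.mul_sum, Finset.sum_mul]
            exact Finset.sum_congr rfl fun j _ => by ring
          · rw [Finset.mul_sum, Finset.sum_mul]
            exact Finset.sum_congr rfl fun i _ => by ring
        calc ∑ k, dv x k * M⁻¹.mulVec (vv x) k
            = (∑ k, ∑ j ∈ Finset.range s, (h * ψhat h j k) * ((P j).eval x * M⁻¹.mulVec (vv x) k))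
              - ∑ k, ∑ i : Fin s, (h * ℓ i x) * (((Jg (uval h (c i * h))).mulVec (lam h i)) k
                  * M⁻¹.mulVec (vv x) k) := by
              rw [← Finset.sum_sub_distrib]
              exact Finset.sum_congr rfl fun k _ => s1 k
          _ = (∑ j ∈ Finset.range s, ∑ k, (h * ψhat h j k) * ((P j).eval x * M⁻¹.mulVec (vv x) k))
              - ∑ i : Fin s, ∑ a : Fin ν, (h * lam h i a) * (ℓ i x * (Qp i a).eval x) := by
              congr 1
              · exact Finset.sum_comm
              · rw [Finset.sum_comm]
                refine Finset.sum_congr rfl fun i _ => ?_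
                have e2 : ∑ a : Fin ν, (h * lam h i a) * (ℓ i x * (Qp i a).eval x)
                    = (h * ℓ i x) * ∑ a, lam h i a * (Qp i a).eval x := by
                  rw [Finset.mul_sum]
                  exact Finset.sum_congr rfl fun a _ => by ring
                rw [e2, hc1 i, Finset.mul_sum]
      have e3 : ∑ k, gU x k * du x k
          = ∑ j ∈ Finset.range s, ∑ k, (h * M⁻¹.mulVec (γ h j) k) * ((P j).eval x * gU x k) := by
        rw [Finset.sum_comm]
        refine Finset.sum_congr rfl fun k _ => ?_
        rw [hdux k, Finset.mul_sum, Finset.mul_sum]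
        exact Finset.sum_congr rfl fun j _ => by ring
      simp only [hG]
      rw [e1, e3]
    -- integrate
    have hGI : ∫ x in (0:ℝ)..1, G x
        = (∑ j ∈ Finset.range s, ∑ k, (h * ψhat h j k) * M⁻¹.mulVec (γ h j) k)
          - (∑ j ∈ Finset.range s, ∑ k, (h * M⁻¹.mulVec (γ h j) k) * ψ h j k) := by
      rw [intervalIntegral.integral_congr hGeq]
      have c1 : Continuous (fun x => ∑ j ∈ Finset.range s, ∑ k,
          (h * ψhat h j k) * ((P j).eval x * M⁻¹.mulVec (vv x) k)) :=
        continuous_finset_sum _ fun j _ => continuous_finset_sum _ fun k _ =>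
          continuous_const.mul ((P j).continuous.mul (cmv k))
      have c2 : Continuous (fun x => ∑ i : Fin s, ∑ a : Fin ν,
          (h * lam h i a) * (ℓ i x * (Qp i a).eval x)) :=
        continuous_finset_sum _ fun i _ => continuous_finset_sum _ fun a _ =>
          continuous_const.mul ((cℓ i).mul (Qp i a).continuous)
      have c3 : Continuous (fun x => ∑ j ∈ Finset.range s, ∑ k,
          (h * M⁻¹.mulVec (γ h j) k) * ((P j).eval x * gU x k)) :=
        continuous_finset_sum _ fun j _ => continuous_finset_sum _ fun k _ =>
          continuous_const.mul ((P j).continuous.mul (cgU k))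
      rw [intervalIntegral.integral_sub ((c1.intervalIntegrable 0 1).sub
          (c2.intervalIntegrable 0 1)) (c3.intervalIntegrable 0 1),
        intervalIntegral.integral_sub (c1.intervalIntegrable 0 1) (c2.intervalIntegrable 0 1)]
      have hA1 : (∫ x in (0:ℝ)..1, ∑ j ∈ Finset.range s, ∑ k,
          (h * ψhat h j k) * ((P j).eval x * M⁻¹.mulVec (vv x) k))
          = ∑ j ∈ Finset.range s, ∑ k, (h * ψhat h j k) * M⁻¹.mulVec (γ h j) k := by
        rw [intervalIntegral.integral_finset_sum (fun j _ =>
          (continuous_finset_sum _ fun k _ => continuous_const.fun_mul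
            ((P j).continuous.fun_mul (cmv k))).intervalIntegrable 0 1)]
        refine Finset.sum_congr rfl fun j _ => ?_
        rw [intervalIntegral.integral_finset_sum (fun k _ =>
          (continuous_const.fun_mul ((P j).continuous.fun_mul (cmv k))).intervalIntegrable 0 1)]
        refine Finset.sum_congr rfl fun k _ => ?_
        rw [intervalIntegral.integral_const_mul, hB1 j k]
      have hA2 : (∫ x in (0:ℝ)..1, ∑ i : Fin s, ∑ a : Fin ν,
          (h * lam h i a) * (ℓ i x * (Qp i a).eval x)) = 0 := by
        rw [intervalIntegral.integral_finset_sum (fun i _ =>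
          (continuous_finset_sum _ fun a _ => continuous_const.fun_mul
            ((cℓ i).fun_mul (Qp i a).continuous)).intervalIntegrable 0 1)]
        refine Finset.sum_eq_zero fun i _ => ?_
        rw [intervalIntegral.integral_finset_sum (fun a _ =>
          (continuous_const.fun_mul ((cℓ i).fun_mul (Qp i a).continuous)).intervalIntegrable 0 1)]
        refine Finset.sum_eq_zero fun a _ => ?_
        rw [intervalIntegral.integral_const_mul, hB2 i a, mul_zero]
      have hA3 : (∫ x in (0:ℝ)..1, ∑ j ∈ Finset.range s, ∑ k,
          (h * M⁻¹.mulVec (γ h j) k) * ((P j).eval x * gU x k))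
          = ∑ j ∈ Finset.range s, ∑ k, (h * M⁻¹.mulVec (γ h j) k) * ψ h j k := by
        rw [intervalIntegral.integral_finset_sum (fun j _ =>
          (continuous_finset_sum _ fun k _ => continuous_const.fun_mul
            ((P j).continuous.fun_mul (cgU k))).intervalIntegrable 0 1)]
        refine Finset.sum_congr rfl fun j _ => ?_
        rw [intervalIntegral.integral_finset_sum (fun k _ =>
          (continuous_const.fun_mul ((P j).continuous.fun_mul (cgU k))).intervalIntegrable 0 1)]
        refine Finset.sum_congr rfl fun k _ => ?_
        rw [intervalIntegral.integral_const_mul, hB3 j k]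
      rw [hA1, hA2, hA3]
      ring
    -- assemble
    rw [hF1, hF0, ← hFTC, hGI]
    have hrhs : -h * ∑ j ∈ Finset.range s, γ h j ⬝ᵥ M⁻¹.mulVec (ψ h j - ψhat h j)
        = ∑ j ∈ Finset.range s, -h * (γ h j ⬝ᵥ M⁻¹.mulVec (ψ h j - ψhat h j)) := by
      rw [Finset.mul_sum]
    rw [hrhs, ← Finset.sum_sub_distrib]
    refine Finset.sum_congr rfl fun j _ => ?_
    have f1 := hflip (ψhat h j) (γ h j)
    have f2 := hflip (ψ h j) (γ h j)
    have e1 : ∑ k, (h * ψhat h j k) * M⁻¹.mulVec (γ h j) k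
        = h * ∑ k, ψhat h j k * M⁻¹.mulVec (γ h j) k := by
      rw [Finset.mul_sum]
      exact Finset.sum_congr rfl fun k _ => by ring
    have e2 : ∑ k, (h * M⁻¹.mulVec (γ h j) k) * ψ h j k
        = h * ∑ k, ψ h j k * M⁻¹.mulVec (γ h j) k := by
      rw [Finset.mul_sum]
      exact Finset.sum_congr rfl fun k _ => by ring
    rw [e1, e2, f1, f2]
    have e3 : γ h j ⬝ᵥ M⁻¹.mulVec (ψ h j - ψhat h j)
        = (∑ k, γ h j k * M⁻¹.mulVec (ψ h j) k)
          - ∑ k, γ h j k * M⁻¹.mulVec (ψhat h j) k := by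
      rw [Matrix.mulVec_sub]
      simp only [dotProduct, Pi.sub_apply]
      rw [← Finset.sum_sub_distrib]
      exact Finset.sum_congr rfl fun k _ => by ring
    rw [e3]
    ring
  refine ⟨key, ?_⟩
  set S : ℝ := (∑ k, ∑ l, |M⁻¹ k l|) + 1 with hS
  have hSsum : (0:ℝ) ≤ ∑ k, ∑ l, |M⁻¹ k l| :=
    Finset.sum_nonneg fun k _ => Finset.sum_nonneg fun l _ => abs_nonneg _
  have hSpos : 0 < S := by rw [hS]; linarith
  have hdotb : ∀ (a b : Fin m → ℝ), |a ⬝ᵥ M⁻¹.mulVec b| ≤ S * (‖a‖ * ‖b‖) := by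
    intro a b
    have h1 : ∀ k, |a k * M⁻¹.mulVec b k| ≤ (∑ l, |M⁻¹ k l|) * (‖a‖ * ‖b‖) := by
      intro k
      rw [abs_mul]
      have ha : |a k| ≤ ‖a‖ := by
        rw [← Real.norm_eq_abs]; exact norm_le_pi_norm a k
      have hb : |M⁻¹.mulVec b k| ≤ (∑ l, |M⁻¹ k l|) * ‖b‖ := by
        simp only [Matrix.mulVec, dotProduct]
        refine le_trans (Finset.abs_sum_le_sum_abs _ _) ?_
        rw [Finset.sum_mul]
        refine Finset.sum_le_sum fun l _ => ?_
        rw [abs_mul]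
        refine mul_le_mul_of_nonneg_left ?_ (abs_nonneg _)
        rw [← Real.norm_eq_abs]; exact norm_le_pi_norm b l
      calc |a k| * |M⁻¹.mulVec b k| ≤ ‖a‖ * ((∑ l, |M⁻¹ k l|) * ‖b‖) :=
            mul_le_mul ha hb (abs_nonneg _) (norm_nonneg a)
        _ = (∑ l, |M⁻¹ k l|) * (‖a‖ * ‖b‖) := by ring
    calc |a ⬝ᵥ M⁻¹.mulVec b| ≤ ∑ k, |a k * M⁻¹.mulVec b k| := by
          simp only [dotProduct]
          exact Finset.abs_sum_le_sum_abs _ _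
      _ ≤ ∑ k, (∑ l, |M⁻¹ k l|) * (‖a‖ * ‖b‖) := Finset.sum_le_sum fun k _ => h1 k
      _ = (∑ k, ∑ l, |M⁻¹ k l|) * (‖a‖ * ‖b‖) := by rw [Finset.sum_mul]
      _ ≤ S * (‖a‖ * ‖b‖) := by
          refine mul_le_mul_of_nonneg_right ?_ (by positivity)
          rw [hS]; linarith
  have hC'nn : (0:ℝ) ≤ S * C^2 * (s:ℝ) :=
    mul_nonneg (mul_nonneg hSpos.le (sq_nonneg C)) (Nat.cast_nonneg s)
  refine ⟨S * C^2 * (s:ℝ) + 1, by linarith, ?_⟩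
  intro h hh
  obtain ⟨hpos, hleh⟩ := hh
  rw [key h ⟨hpos, hleh⟩]
  have habs : |(-h) * ∑ j ∈ Finset.range s, γ h j ⬝ᵥ M⁻¹.mulVec (ψ h j - ψhat h j)|
      = h * |∑ j ∈ Finset.range s, γ h j ⬝ᵥ M⁻¹.mulVec (ψ h j - ψhat h j)| := by
    rw [abs_mul, abs_neg, abs_of_pos hpos]
  rw [habs]
  have hstep : |∑ j ∈ Finset.range s, γ h j ⬝ᵥ M⁻¹.mulVec (ψ h j - ψhat h j)|
      ≤ (s:ℝ) * (S * C^2 * h^(2*K)) := by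
    refine le_trans (Finset.abs_sum_le_sum_abs _ _) ?_
    have hsum : ∑ j ∈ Finset.range s, |γ h j ⬝ᵥ M⁻¹.mulVec (ψ h j - ψhat h j)|
        ≤ ∑ _j ∈ Finset.range s, S * C^2 * h^(2*K) := by
      refine Finset.sum_le_sum fun j hj => ?_
      have hj' : j < s := Finset.mem_range.mp hj
      have g1 := hγb h ⟨hpos, hleh⟩ j hj'
      have g2 := hΔ h ⟨hpos, hleh⟩ j hj'
      refine le_trans (hdotb (γ h j) (ψ h j - ψhat h j)) ?_
      have hmul : ‖γ h j‖ * ‖ψ h j - ψhat h j‖ ≤ (C * h^j) * (C * h^(2*K - j)) :=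
        mul_le_mul g1 g2 (norm_nonneg _) (by positivity)
      have heq : (C * h^j) * (C * h^(2*K - j)) = C^2 * h^(2*K) := by
        have hjk : j + (2*K - j) = 2*K := by omega
        rw [show (C * h^j) * (C * h^(2*K - j)) = C^2 * (h^j * h^(2*K-j)) by ring,
          ← pow_add, hjk]
      calc S * (‖γ h j‖ * ‖ψ h j - ψhat h j‖) ≤ S * ((C * h^j) * (C * h^(2*K - j))) :=
            mul_le_mul_of_nonneg_left hmul hSpos.le
        _ = S * C^2 * h^(2*K) := by rw [heq]; ring
    refine le_trans hsum ?_
    rw [Finset.sum_const, Finset.card_range, nsmul_eq_mul]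
  have hpow : (0:ℝ) ≤ h^(2*K+1) := pow_nonneg hpos.le _
  calc h * |∑ j ∈ Finset.range s, γ h j ⬝ᵥ M⁻¹.mulVec (ψ h j - ψhat h j)|
      ≤ h * ((s:ℝ) * (S * C^2 * h^(2*K))) := mul_le_mul_of_nonneg_left hstep hpos.le
    _ = (S * C^2 * (s:ℝ)) * h^(2*K+1) := by rw [pow_succ]; ring
    _ ≤ (S * C^2 * (s:ℝ) + 1) * h^(2*K+1) := by nlinarith
end
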